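/- arXiv:2601.23040 — 10 statements merged into one kernel-verified Lean document; each statement's English description precedes it below -/
import Mathlib

section
/- Let X be a complex Hilbert space, J a skew-adjoint operator and H a bounded self-adjoint operator on X, and set L = JH. If f is an eigenvector of L with eigenvalue λ satisfying Re(λ) ≠ 0, then ⟨H f, f⟩ = 0. -/
open RCLike ComplexConjugate

section

variable {𝕜 X : Type*} [RCLike 𝕜] [NormedAddCommGroup X] [InnerProductSpace 𝕜 X]
  {J H : X → X} {f : X} {μ : 𝕜}

/-- Evaluating the skew form `⟪·, J ·⟫` at `H f` gives `μ ⟪H f, f⟫` on one side and, through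
the symmetry of `H`, `conj μ ⟪H f, f⟫` on the other. -/
theorem add_conj_mul_inner_eq_zero (hJ : ∀ x, inner 𝕜 (J x) x = -inner 𝕜 x (J x))
    (hH : ∀ x y, inner 𝕜 (H x) y = inner 𝕜 x (H y)) (heig : J (H f) = μ • f) :
    (μ + conj μ) * inner 𝕜 (H f) f = 0 := by
  have hright : inner 𝕜 (H f) (J (H f)) = μ * inner 𝕜 (H f) f := by
    rw [heig, inner_smul_right]
  have hleft : inner 𝕜 (J (H f)) (H f) = conj μ * inner 𝕜 (H f) f := by
    rw [heig, inner_smul_left, hH]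
  linear_combination hleft.symm.trans ((hJ (H f)).trans (congrArg Neg.neg hright))

theorem inner_map_eq_zero_of_re_ne_zero (hJ : ∀ x, inner 𝕜 (J x) x = -inner 𝕜 x (J x))
    (hH : ∀ x y, inner 𝕜 (H x) y = inner 𝕜 x (H y)) (heig : J (H f) = μ • f) (hμ : re μ ≠ 0) :
    inner 𝕜 (H f) f = 0 := by
  have h := add_conj_mul_inner_eq_zero hJ hH heig
  rw [add_conj] at h
  exact (mul_eq_zero.mp h).resolve_left (by exact_mod_cast mul_ne_zero two_ne_zero hμ)

end

theorem stmt_0_general {X : Type*} [NormedAddCommGroup X] [InnerProductSpace ℂ X]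
    (J : X →ₗ[ℂ] X) (H : X →L[ℂ] X)
    (hJ : ∀ f g : X, (inner ℂ (J f) g : ℂ) = -inner ℂ f (J g))
    (hH : ∀ f g : X, (inner ℂ (H f) g : ℂ) = inner ℂ f (H g))
    (f : X) (μ : ℂ)
    (heig : J (H f) = μ • f) (hμ : μ.re ≠ 0) :
    (inner ℂ (H f) f : ℂ) = 0 :=
  inner_map_eq_zero_of_re_ne_zero (fun x => hJ x x) hH heig hμ

/-- For a Hamiltonian operator `L = J H` on a complex Hilbert space, with `J` skew-adjoint
and `H` bounded self-adjoint, any eigenvector of `L` whose eigenvalue has nonzero real part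
is isotropic for the quadratic form of `H`. -/
theorem stmt_0 {X : Type*} [NormedAddCommGroup X] [InnerProductSpace ℂ X] [CompleteSpace X]
    (J : X →ₗ[ℂ] X) (H : X →L[ℂ] X)
    (hJ : ∀ f g : X, (inner ℂ (J f) g : ℂ) = -inner ℂ f (J g))
    (hH : ∀ f g : X, (inner ℂ (H f) g : ℂ) = inner ℂ f (H g))
    (f : X) (μ : ℂ) (hf : f ≠ 0)
    (heig : J (H f) = μ • f) (hμ : μ.re ≠ 0) :
    (inner ℂ (H f) f : ℂ) = 0 :=
  stmt_0_general J H hJ hH f μ heig hμ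
end

section
/- Let X be a Hilbert space, L = JH a Hamiltonian operator where H is bounded self-adjoint with exactly k negative eigenvalues (counted with multiplicity), and suppose L has m linearly independent eigenvectors whose eigenvalues have strictly positive real part. Then m ≤ k. In particular if H has no negative eigenvalues, the spectrum of L off the imaginary axis contains no eigenvalues. -/
/-!
The eigenvectors of `J H` with eigenvalues in the open right half-plane are pairwise orthogonal
for the form `⟪H ·, ·⟫`, since skew-adjointness of `J` gives `(conj a + b) ⟪H u, v⟫ = 0`. So this
form vanishes on their span `S`, and `H` is injective on `S` because the eigenvalues are nonzero.
For `0 < t` with `t ‖H‖ < 2`, expanding the form at `x - t H x` for `x ∈ S` gives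
`-2t ‖H x‖² + t² ⟪H² x, H x⟫ < 0`; hence `1 - t H` maps `S` injectively onto a subspace on which
the form is negative definite, and `dim S ≤ k`.
-/

open scoped InnerProductSpace

section

variable {X : Type*} [NormedAddCommGroup X] [InnerProductSpace ℂ X]

theorem inner_apply_eq_zero_of_apply_apply_eq_smul {J : X →ₗ[ℂ] X} {H : X →L[ℂ] X}
    (hJ : ∀ f g : X, ⟪J f, g⟫_ℂ = -⟪f, J g⟫_ℂ) (hH : ∀ f g : X, ⟪H f, g⟫_ℂ = ⟪f, H g⟫_ℂ)
    {u v : X} {a b : ℂ} (hu : J (H u) = a • u) (hv : J (H v) = b • v)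
    (hab : starRingEnd ℂ a + b ≠ 0) : ⟪H u, v⟫_ℂ = 0 := by
  have key : ⟪H (J (H u)), v⟫_ℂ = -⟪H u, J (H v)⟫_ℂ := by rw [hH]; exact hJ _ _
  rw [hu, hv, map_smul, inner_smul_left, inner_smul_right] at key
  have : (starRingEnd ℂ a + b) * ⟪H u, v⟫_ℂ = 0 := by rw [add_mul, key]; ring
  exact (mul_eq_zero.mp this).resolve_left hab

theorem inner_apply_self_eq_zero_of_mem_span {ι : Type*} [Fintype ι] {H : X →L[ℂ] X}
    {f : ι → X} (horth : ∀ i j, ⟪H (f i), f j⟫_ℂ = 0) {x : X}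
    (hx : x ∈ Submodule.span ℂ (Set.range f)) : ⟪H x, x⟫_ℂ = 0 := by
  obtain ⟨c, rfl⟩ := (Submodule.mem_span_range_iff_exists_fun ℂ).mp hx
  simp only [map_sum, map_smul, sum_inner, inner_sum, inner_smul_left, inner_smul_right, horth,
    mul_zero, Finset.sum_const_zero]

theorem eq_zero_of_mem_span_of_apply_eq_zero {ι M : Type*} [Fintype ι] [AddCommGroup M]
    [Module ℂ M] {L : M →ₗ[ℂ] M} {f : ι → M} {μ : ι → ℂ} (hind : LinearIndependent ℂ f)
    (heig : ∀ i, L (f i) = μ i • f i) (hμ : ∀ i, μ i ≠ 0) {x : M}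
    (hx : x ∈ Submodule.span ℂ (Set.range f)) (hLx : L x = 0) : x = 0 := by
  obtain ⟨c, rfl⟩ := (Submodule.mem_span_range_iff_exists_fun ℂ).mp hx
  simp only [map_sum, map_smul, heig, smul_smul] at hLx
  have hc : ∀ i, c i = 0 := fun i =>
    (mul_eq_zero.mp (Fintype.linearIndependent_iff.mp hind _ hLx i)).resolve_right (hμ i)
  simp [hc]

theorem re_inner_apply_sub_smul_apply_lt_zero {H : X →L[ℂ] X}
    (hH : ∀ f g : X, ⟪H f, g⟫_ℂ = ⟪f, H g⟫_ℂ) {x : X} (hx : (⟪H x, x⟫_ℂ).re ≤ 0)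
    (hHx : H x ≠ 0) {t : ℝ} (ht : 0 < t) (htH : t * ‖H‖ < 2) :
    (⟪H (x - (t : ℂ) • H x), x - (t : ℂ) • H x⟫_ℂ).re < 0 := by
  have expand : ⟪H (x - (t : ℂ) • H x), x - (t : ℂ) • H x⟫_ℂ
      = ⟪H x, x⟫_ℂ - ((2 * t : ℝ) : ℂ) * ⟪H x, H x⟫_ℂ + ((t ^ 2 : ℝ) : ℂ) * ⟪H (H x), H x⟫_ℂ := by
    rw [map_sub, map_smul, inner_sub_left, inner_sub_right, inner_sub_right, inner_smul_left,
      inner_smul_right, inner_smul_left, inner_smul_right, hH (H x) x, Complex.conj_ofReal]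
    push_cast
    ring
  have hbound : (⟪H (H x), H x⟫_ℂ).re ≤ ‖H‖ * ‖H x‖ ^ 2 :=
    calc (⟪H (H x), H x⟫_ℂ).re ≤ ‖H (H x)‖ * ‖H x‖ := re_inner_le_norm (𝕜 := ℂ) _ _
      _ ≤ ‖H‖ * ‖H x‖ * ‖H x‖ := by gcongr; exact H.le_opNorm _
      _ = ‖H‖ * ‖H x‖ ^ 2 := by ring
  have hnorm : (⟪H x, H x⟫_ℂ).re = ‖H x‖ ^ 2 := inner_self_eq_norm_sq (𝕜 := ℂ) _
  have hpos : 0 < ‖H x‖ := norm_pos_iff.mpr hHx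
  rw [expand, Complex.add_re, Complex.sub_re, Complex.re_ofReal_mul, Complex.re_ofReal_mul, hnorm]
  nlinarith [mul_le_mul_of_nonneg_left hbound (sq_nonneg t), mul_pos ht (pow_pos hpos 2)]

theorem exists_finrank_eq_and_re_inner_apply_self_neg {H : X →L[ℂ] X}
    (hH : ∀ f g : X, ⟪H f, g⟫_ℂ = ⟪f, H g⟫_ℂ) (S : Submodule ℂ X) [FiniteDimensional ℂ S]
    (hS : ∀ x ∈ S, (⟪H x, x⟫_ℂ).re ≤ 0) (hker : ∀ x ∈ S, H x = 0 → x = 0) :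
    ∃ V : Submodule ℂ X, FiniteDimensional ℂ V ∧ Module.finrank ℂ V = Module.finrank ℂ S ∧
      ∀ v ∈ V, v ≠ 0 → (⟪H v, v⟫_ℂ).re < 0 := by
  set t : ℝ := (‖H‖ + 1)⁻¹
  have ht : 0 < t := by positivity
  have htH : t * ‖H‖ < 2 := by
    rw [inv_mul_lt_iff₀ (by positivity)]
    linarith [norm_nonneg H]
  have hneg : ∀ x : S, x ≠ 0 →
      (⟪H (x - (t : ℂ) • H x), (x : X) - (t : ℂ) • H x⟫_ℂ).re < 0 := fun x hx =>
    re_inner_apply_sub_smul_apply_lt_zero hH (hS x x.2) (fun h0 => hx (by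
      simpa using hker x x.2 h0)) ht htH
  set T : S →ₗ[ℂ] X := (LinearMap.id - (t : ℂ) • (H : X →ₗ[ℂ] X)) ∘ₗ S.subtype
  have hT : ∀ x, T x = x - (t : ℂ) • H x := fun _ => rfl
  have hTinj : Function.Injective T := by
    rw [← LinearMap.ker_eq_bot, LinearMap.ker_eq_bot']
    intro x hx
    by_contra hx0
    have := hneg x hx0
    rw [← hT, hx, inner_zero_right, Complex.zero_re] at this
    exact lt_irrefl 0 this
  refine ⟨LinearMap.range T, inferInstance, LinearMap.finrank_range_of_inj hTinj, ?_⟩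
  rintro _ ⟨x, rfl⟩ hx
  exact hneg x (fun h => hx (by rw [h, map_zero]))

end

theorem stmt_2_general {X : Type*} [NormedAddCommGroup X] [InnerProductSpace ℂ X]
    (J : X →ₗ[ℂ] X) (H : X →L[ℂ] X)
    (hJ : ∀ f g : X, (inner ℂ (J f) g : ℂ) = -inner ℂ f (J g))
    (hH : ∀ f g : X, (inner ℂ (H f) g : ℂ) = inner ℂ f (H g))
    (k m : ℕ)
    (hneg : ∀ V : Submodule ℂ X, FiniteDimensional ℂ V →
      (∀ v ∈ V, v ≠ 0 → ((inner ℂ (H v) v : ℂ)).re < 0) → Module.finrank ℂ V ≤ k)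
    (f : Fin m → X) (μ : Fin m → ℂ)
    (hind : LinearIndependent ℂ f)
    (heig : ∀ i, J (H (f i)) = μ i • f i)
    (hre : ∀ i, 0 < (μ i).re) :
    m ≤ k := by
  have hμ : ∀ i, μ i ≠ 0 := fun i h => by simpa [h] using hre i
  have horth : ∀ i j, ⟪H (f i), f j⟫_ℂ = 0 := fun i j =>
    inner_apply_eq_zero_of_apply_apply_eq_smul hJ hH (heig i) (heig j) fun h => by
      have := congrArg Complex.re h
      simp only [Complex.add_re, Complex.conj_re, Complex.zero_re] at this
      linarith [hre i, hre j]
  set S := Submodule.span ℂ (Set.range f)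
  have : FiniteDimensional ℂ S := FiniteDimensional.span_of_finite ℂ (Set.finite_range f)
  obtain ⟨V, hVfin, hVdim, hVneg⟩ := exists_finrank_eq_and_re_inner_apply_self_neg hH S
    (fun x hx => by rw [inner_apply_self_eq_zero_of_mem_span horth hx, Complex.zero_re])
    (fun x hx hHx => eq_zero_of_mem_span_of_apply_eq_zero (L := J ∘ₗ H) hind heig hμ hx
      (by simp [hHx]))
  calc m = Module.finrank ℂ S := by rw [finrank_span_eq_card hind, Fintype.card_fin]
    _ = Module.finrank ℂ V := hVdim.symm
    _ ≤ k := hneg V hVfin hVneg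

/-- If the bounded self-adjoint operator `H` has exactly `k` negative eigenvalues (i.e. every
finite-dimensional subspace on which the quadratic form of `H` is negative definite has
dimension at most `k`), then the Hamiltonian operator `L = J H` has at most `k` linearly
independent eigenvectors whose eigenvalues have strictly positive real part. -/
theorem stmt_2 {X : Type*} [NormedAddCommGroup X] [InnerProductSpace ℂ X] [CompleteSpace X]
    (J : X →ₗ[ℂ] X) (H : X →L[ℂ] X)
    (hJ : ∀ f g : X, (inner ℂ (J f) g : ℂ) = -inner ℂ f (J g))
    (hH : ∀ f g : X, (inner ℂ (H f) g : ℂ) = inner ℂ f (H g))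
    (k m : ℕ)
    (hneg : ∀ V : Submodule ℂ X, FiniteDimensional ℂ V →
      (∀ v ∈ V, v ≠ 0 → ((inner ℂ (H v) v : ℂ)).re < 0) → Module.finrank ℂ V ≤ k)
    (f : Fin m → X) (μ : Fin m → ℂ)
    (hind : LinearIndependent ℂ f)
    (heig : ∀ i, J (H (f i)) = μ i • f i)
    (hre : ∀ i, 0 < (μ i).re) :
    m ≤ k :=
  stmt_2_general J H hJ hH k m hneg f μ hind heig hre
end

section
/- Let T be a skew-adjoint operator on a Hilbert space X and λ ∈ ℂ with Re(λ) > 0, with resolvent R = (T - λ)⁻¹. Let v, v*, u₀, u₀* ∈ X, and set r = v - (T - λ)u₀ and r* = v* - (T - λ)* u₀*. Then |⟨Rv, v*⟩ - (⟨u₀, v*⟩ + ⟨r, u₀*⟩)| ≤ ‖r‖ ‖r*‖ / Re(λ). -/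
/-!
Skew-adjointness makes `⟪T g, g⟫` purely imaginary, so `Re ⟪(T - λ) g, g⟫ = -Re λ ‖g‖²`
and Cauchy–Schwarz gives `Re λ ‖g‖ ≤ ‖(T - λ) g‖`, i.e. `‖R‖ ≤ 1 / Re λ`. Writing
`v = (T - λ) u₀ + r` and `v* = (T - λ)* u₀* + r*`, the error of the primal-dual estimate
is exactly `⟨R r, r*⟩`, which is at most `‖r‖ ‖r*‖ / Re λ`.
-/

open scoped InnerProductSpace

namespace SkewAdjoint

variable {𝕜 E F : Type*} [RCLike 𝕜] [NormedAddCommGroup E] [InnerProductSpace 𝕜 E]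
  [FunLike F E E] {T : F} (hT : ∀ f g : E, ⟪T f, g⟫_𝕜 = -⟪f, T g⟫_𝕜)
include hT

theorem re_inner_apply_self (g : E) : RCLike.re ⟪T g, g⟫_𝕜 = 0 := by
  have h := congrArg RCLike.re (hT g g)
  rw [← inner_conj_symm g (T g), map_neg, RCLike.conj_re] at h
  linarith

theorem inner_sub_smul_left (l : 𝕜) (f g : E) :
    ⟪T f - l • f, g⟫_𝕜 = ⟪f, -T g - starRingEnd 𝕜 l • g⟫_𝕜 := by
  rw [inner_sub_left, inner_smul_left, hT, inner_sub_right, inner_neg_right, inner_smul_right]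

theorem re_mul_norm_le_norm_sub_smul (l : 𝕜) (g : E) :
    RCLike.re l * ‖g‖ ≤ ‖T g - l • g‖ := by
  have hre : RCLike.re ⟪T g - l • g, g⟫_𝕜 = -(RCLike.re l * ‖g‖ ^ 2) := by
    rw [inner_sub_left, inner_smul_left, inner_self_eq_norm_sq_to_K, map_sub,
      re_inner_apply_self hT, ← RCLike.ofReal_pow, RCLike.re_mul_ofReal, RCLike.conj_re]
    ring
  have hsq : RCLike.re l * ‖g‖ ^ 2 ≤ ‖T g - l • g‖ * ‖g‖ :=
    calc RCLike.re l * ‖g‖ ^ 2 = -RCLike.re ⟪T g - l • g, g⟫_𝕜 := by rw [hre, neg_neg]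
      _ ≤ ‖⟪T g - l • g, g⟫_𝕜‖ := (neg_le_abs _).trans (RCLike.abs_re_le_norm _)
      _ ≤ ‖T g - l • g‖ * ‖g‖ := norm_inner_le_norm _ _
  rcases (norm_nonneg g).eq_or_lt with hg | hg
  · rw [← hg, mul_zero]
    exact norm_nonneg _
  · nlinarith

variable {l : 𝕜} {R : F}

theorem norm_resolvent_apply_le (hl : 0 < RCLike.re l) (hR : ∀ f, T (R f) - l • R f = f)
    (f : E) : ‖R f‖ ≤ ‖f‖ / RCLike.re l := by
  rw [le_div_iff₀ hl, mul_comm]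
  simpa only [hR] using re_mul_norm_le_norm_sub_smul hT l (R f)

theorem inner_resolvent_sub_eq [LinearMapClass F 𝕜 E E] (hR1 : ∀ f, T (R f) - l • R f = f)
    (hR2 : ∀ f, R (T f - l • f) = f) (v vs u us : E) :
    ⟪R v, vs⟫_𝕜 - (⟪u, vs⟫_𝕜 + ⟪v - (T u - l • u), us⟫_𝕜) =
      ⟪R (v - (T u - l • u)), vs - (-T us - starRingEnd 𝕜 l • us)⟫_𝕜 := by
  have hA : T (R v - u) - l • (R v - u) = v - (T u - l • u) := by
    rw [map_sub, smul_sub, sub_sub_sub_comm, hR1]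
  rw [map_sub, hR2, inner_sub_right, ← inner_sub_smul_left hT, hA, inner_sub_left (R v)]
  ring

end SkewAdjoint

theorem stmt_5_general {X : Type*} [NormedAddCommGroup X] [InnerProductSpace ℂ X]
    (T : X →L[ℂ] X)
    (hT : ∀ f g : X, (inner ℂ (T f) g : ℂ) = -inner ℂ f (T g))
    (l : ℂ) (hl : 0 < l.re)
    (R : X →L[ℂ] X)
    (hR1 : ∀ f, T (R f) - l • R f = f) (hR2 : ∀ f, R (T f - l • f) = f)
    (v vs u₀ us : X)
    (r rs : X)
    (hr : r = v - (T u₀ - l • u₀))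
    (hrs : rs = vs - (-(T us) - (starRingEnd ℂ) l • us)) :
    ‖(inner ℂ (R v) vs : ℂ) - ((inner ℂ u₀ vs : ℂ) + (inner ℂ r us : ℂ))‖
      ≤ ‖r‖ * ‖rs‖ / l.re := by
  rw [hr, SkewAdjoint.inner_resolvent_sub_eq hT hR1 hR2, ← hr, ← hrs]
  calc ‖(inner ℂ (R r) rs : ℂ)‖ ≤ ‖R r‖ * ‖rs‖ := norm_inner_le_norm _ _
    _ ≤ ‖r‖ / l.re * ‖rs‖ := by gcongr; exact SkewAdjoint.norm_resolvent_apply_le hT hl hR1 r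
    _ = ‖r‖ * ‖rs‖ / l.re := div_mul_eq_mul_div _ _ _

/-- Primal-dual error bound: for a skew-adjoint `T`, `Re λ > 0`, and `R = (T - λ)⁻¹`, with
residuals `r = v - (T - λ)u₀` and `r* = v* - (T - λ)* u₀*` (where `(T - λ)* = -T - conj λ`),
one has `|⟨Rv, v*⟩ - (⟨u₀, v*⟩ + ⟨r, u₀*⟩)| ≤ ‖r‖ ‖r*‖ / Re λ`. -/
theorem stmt_5 {X : Type*} [NormedAddCommGroup X] [InnerProductSpace ℂ X] [CompleteSpace X]
    (T : X →L[ℂ] X)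
    (hT : ∀ f g : X, (inner ℂ (T f) g : ℂ) = -inner ℂ f (T g))
    (l : ℂ) (hl : 0 < l.re)
    (R : X →L[ℂ] X)
    (hR1 : ∀ f, T (R f) - l • R f = f) (hR2 : ∀ f, R (T f - l • f) = f)
    (v vs u₀ us : X)
    (r rs : X)
    (hr : r = v - (T u₀ - l • u₀))
    (hrs : rs = vs - (-(T us) - (starRingEnd ℂ) l • us)) :
    ‖(inner ℂ (R v) vs : ℂ) - ((inner ℂ u₀ vs : ℂ) + (inner ℂ r us : ℂ))‖
      ≤ ‖r‖ * ‖rs‖ / l.re :=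
  stmt_5_general T hT l hl R hR1 hR2 v vs u₀ us r rs hr hrs
end

section
/- For the Taylor–Green transport operator J f = cos(x)sin(y)∂_y f - sin(x)cos(y)∂_x f and E_{j,k}(x,y) = cos(jx)cos(ky) + i(-1)^j cos(kx)cos(jy), one has J E_{1,0} = (i/2) E_{1,0} - (1/2) E_{2,1}. -/
/-- `E_{j,k}(x,y) = cos(jx)cos(ky) + i(-1)^j cos(kx)cos(jy)`. -/
noncomputable def tgE (j k : ℤ) (x y : ℝ) : ℂ :=
  ((Real.cos ((j : ℝ) * x) * Real.cos ((k : ℝ) * y) : ℝ) : ℂ)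
    + Complex.I * (-1 : ℂ) ^ j * ((Real.cos ((k : ℝ) * x) * Real.cos ((j : ℝ) * y) : ℝ) : ℂ)

/-- For the Taylor–Green transport operator `J f = cos x sin y ∂_y f - sin x cos y ∂_x f`,
one has `J E_{1,0} = (i/2) E_{1,0} - (1/2) E_{2,1}`. -/
theorem stmt_9 (x y : ℝ) :
    ((Real.cos x * Real.sin y : ℝ) : ℂ) * deriv (fun t => tgE 1 0 x t) y
      - ((Real.sin x * Real.cos y : ℝ) : ℂ) * deriv (fun t => tgE 1 0 t y) x
    = (Complex.I / 2) * tgE 1 0 x y - (1 / 2 : ℂ) * tgE 2 1 x y := by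
  have hcos : ∀ t : ℝ, HasDerivAt (fun s : ℝ => ((Real.cos s : ℝ) : ℂ)) (-Real.sin t : ℝ) t :=
    fun t => (Real.hasDerivAt_cos t).ofReal_comp
  have h1 : deriv (fun t => tgE 1 0 x t) y = Complex.I * Real.sin y := by
    have : HasDerivAt (fun t => tgE 1 0 x t) (Complex.I * Real.sin y) y := by
      have h := ((hcos y).const_mul (Complex.I * (-1 : ℂ) ^ (1 : ℤ)))
      have h2 := h.const_add ((Real.cos ((1 : ℤ) * x) * Real.cos ((0 : ℤ) * y) : ℝ) : ℂ)
      convert h2 using 1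
      · rfl
      · ext t
        simp [tgE]
      · push_cast
        ring
    rw [this.deriv]
  have h2 : deriv (fun t => tgE 1 0 t y) x = -(Real.sin x : ℂ) := by
    have : HasDerivAt (fun t => tgE 1 0 t y) (-(Real.sin x : ℂ)) x := by
      have h := (hcos x).add_const (Complex.I * (-1 : ℂ) ^ (1 : ℤ) *
        ((Real.cos ((0 : ℤ) * x) * Real.cos ((1 : ℤ) * y) : ℝ) : ℂ))
      convert h using 1
      · rfl
      · ext t
        simp [tgE]
      · push_cast
        ring
    rw [this.deriv]
  rw [h1, h2]
  simp only [tgE]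
  push_cast [-Complex.ofReal_cos, -Complex.ofReal_sin]
  simp only [one_mul, zero_mul, Real.cos_zero, Real.cos_two_mul, Complex.ofReal_sub,
    Complex.ofReal_mul, Complex.ofReal_pow, Complex.ofReal_ofNat, Complex.ofReal_one]
  have sxc : (Real.sin x : ℂ) ^ 2 = 1 - (Real.cos x : ℂ) ^ 2 := by
    have := Real.sin_sq x; exact_mod_cast congrArg Complex.ofReal this
  have syc : (Real.sin y : ℂ) ^ 2 = 1 - (Real.cos y : ℂ) ^ 2 := by
    have := Real.sin_sq y; exact_mod_cast congrArg Complex.ofReal this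
  linear_combination Complex.I * (Real.cos x : ℂ) * syc + (Real.cos y : ℂ) * sxc + (Real.cos y : ℂ) * (1 / 2) * Complex.I_sq
end

section
/- For h ∈ (0,1), the line integral of sin(x) over the Taylor–Green streamline, namely 4∫_{arcsin h}^{π/2} sin(x)/√(sin²x - h²) dx, equals 2π. -/
open Real

/- Substituting `u = cos x` turns the integrand into `-du / √(1 - h² - u²)`, so
`-arcsin (cos x / √(1 - h²))` is a primitive; it vanishes at `π/2` and equals `-π/2` at
`arcsin h`, where `cos x = √(1 - h²)`. -/

theorem hasDerivAt_neg_arcsin_cos_div {c x : ℝ} (hc : 0 < c) (hx : |cos x| < c) :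
    HasDerivAt (fun y => -arcsin (cos y / c)) (sin x / √(c ^ 2 - cos x ^ 2)) x := by
  obtain ⟨hlo, hhi⟩ := abs_lt.mp hx
  have hu : -1 < cos x / c ∧ cos x / c < 1 :=
    ⟨by rwa [lt_div_iff₀ hc, neg_one_mul], by rwa [div_lt_one hc]⟩
  have hsq : 1 - (cos x / c) ^ 2 = (c ^ 2 - cos x ^ 2) / c ^ 2 := by field_simp
  have hpos : 0 < c ^ 2 - cos x ^ 2 := by nlinarith
  refine ((hasDerivAt_arcsin hu.1.ne' hu.2.ne).comp x
    ((hasDerivAt_cos x).div_const c)).neg.congr_deriv ?_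
  rw [hsq, sqrt_div hpos.le, sqrt_sq hc.le]
  field_simp

theorem integral_sin_div_sqrt_sq_sub_cos_sq {a b c : ℝ} (hc : 0 < c) (ha : 0 ≤ a)
    (hab : a ≤ b) (hb : b ≤ π) (hca : cos a ≤ c) (hcb : -c ≤ cos b) :
    ∫ x in a..b, sin x / √(c ^ 2 - cos x ^ 2) = arcsin (cos a / c) - arcsin (cos b / c) := by
  have hderiv : ∀ x ∈ Set.Ioo a b,
      HasDerivAt (fun y => -arcsin (cos y / c)) (sin x / √(c ^ 2 - cos x ^ 2)) x := by
    rintro x ⟨hax, hxb⟩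
    refine hasDerivAt_neg_arcsin_cos_div hc (abs_lt.mpr ⟨?_, ?_⟩)
    · exact hcb.trans_lt (cos_lt_cos_of_nonneg_of_le_pi (ha.trans hax.le) hb hxb)
    · exact (cos_lt_cos_of_nonneg_of_le_pi ha (hxb.le.trans hb) hax).trans_le hca
  have hnonneg : ∀ x ∈ Set.Ioo a b, 0 ≤ sin x / √(c ^ 2 - cos x ^ 2) := fun x hx =>
    div_nonneg (sin_nonneg_of_nonneg_of_le_pi (ha.trans hx.1.le) (hx.2.le.trans hb))
      (sqrt_nonneg _)
  have hcont : ContinuousOn (fun y => -arcsin (cos y / c)) (Set.Icc a b) :=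
    (continuous_arcsin.comp (continuous_cos.div_const c)).neg.continuousOn
  have hint :
      IntervalIntegrable (fun x => sin x / √(c ^ 2 - cos x ^ 2)) MeasureTheory.volume a b := by
    apply intervalIntegral.intervalIntegrable_deriv_of_nonneg (g := fun y => -arcsin (cos y / c))
    · rwa [Set.uIcc_of_le hab]
    · rwa [min_eq_left hab, max_eq_right hab]
    · rwa [min_eq_left hab, max_eq_right hab]
  rw [intervalIntegral.integral_eq_sub_of_hasDeriv_right_of_le hab hcont
    (fun x hx => (hderiv x hx).hasDerivWithinAt) hint]
  ring

/-- The line integral of `sin x` over the Taylor–Green streamline `{sin x sin y = h}`: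
`4 ∫_{arcsin h}^{π/2} sin x / √(sin²x - h²) dx = 2π` for every `h ∈ (0,1)`. -/
theorem stmt_10 (h : ℝ) (hh : h ∈ Set.Ioo (0 : ℝ) 1) :
    4 * ∫ x in Real.arcsin h..(Real.pi / 2),
        Real.sin x / Real.sqrt (Real.sin x ^ 2 - h ^ 2) = 2 * Real.pi := by
  obtain ⟨h0, h1⟩ := hh
  set c := √(1 - h ^ 2)
  have hc : 0 < c := sqrt_pos.mpr (by nlinarith)
  have hc_sq : c ^ 2 = 1 - h ^ 2 := sq_sqrt (by nlinarith)
  have hcos : cos (arcsin h) = c := cos_arcsin h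
  have hintegrand : ∀ x, sin x ^ 2 - h ^ 2 = c ^ 2 - cos x ^ 2 := fun x => by
    rw [hc_sq, ← sin_sq_add_cos_sq x]; ring
  simp_rw [hintegrand]
  rw [integral_sin_div_sqrt_sq_sub_cos_sq hc (arcsin_nonneg.mpr h0.le)
      (arcsin_le_pi_div_two h) (by linarith [pi_pos]) hcos.le (by simp [hc.le]),
    hcos, div_self hc.ne', cos_pi_div_two, zero_div, arcsin_one, arcsin_zero]
  ring
end

section
/- For h ∈ (0,1), the period function T(h) = 4∫_{arcsin h}^{π/2} dx/√(sin²x - h²) satisfies T(h) = 4∫_0^{π/2} ds/√(1 - (1-h²) sin² s), i.e. it equals 2π divided by the arithmetic–geometric mean M(1,h). -/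
/-!
The substitution `cos x = √(1 - h²) sin s` turns the period integral into the complete elliptic
integral `∫₀^{π/2} ds / √(cos² s + h² sin² s)`, and `t = h tan s` turns that into Gauss's form
`I(1, h)`, where `I(a, b) = ∫₀^∞ dt / √((a² + t²)(b² + t²))`. Newman's substitution
`u = (t - ab/t)/2` maps `(0, ∞)` onto `ℝ` and shows `I(a, b) = I((a + b)/2, √(ab))`, so `I(1, h)`
is constant along the AGM iteration `(aₙ, bₙ)`. As `I` is antitone in both arguments and
`I(c, c) = π/(2c)`, it is squeezed between `π/(2aₙ)` and `π/(2bₙ)`, which both tend to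
`π/(2 M(1, h))`.
-/

/-- The arithmetic–geometric mean iteration: `a_{n+1} = (a_n + b_n)/2`, `b_{n+1} = √(a_n b_n)`. -/
noncomputable def agmPair (a b : ℝ) : ℕ → ℝ × ℝ
  | 0 => (a, b)
  | n + 1 =>
      (((agmPair a b n).1 + (agmPair a b n).2) / 2,
        Real.sqrt ((agmPair a b n).1 * (agmPair a b n).2))

/-- The arithmetic–geometric mean `M(a,b)`, the common limit of the AGM iteration. -/
noncomputable def agm (a b : ℝ) : ℝ :=
  Filter.limUnder Filter.atTop fun n => (agmPair a b n).1

open Real MeasureTheory Set Filter Topology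

noncomputable def agmIntegrand (a b t : ℝ) : ℝ := 1 / √((a ^ 2 + t ^ 2) * (b ^ 2 + t ^ 2))

noncomputable def agmIntegral (a b : ℝ) : ℝ := ∫ t in Ioi 0, agmIntegrand a b t

section GaussIntegral

variable {a b c : ℝ}

lemma integrable_inv_sq_add_sq (hc : c ≠ 0) : Integrable fun t : ℝ ↦ (c ^ 2 + t ^ 2)⁻¹ := by
  have h := (integrable_inv_one_add_sq.comp_div hc).const_mul (c ^ 2)⁻¹
  refine h.congr (ae_of_all _ fun t ↦ ?_)
  field_simp

lemma integral_Ioi_inv_sq_add_sq (hc : 0 < c) :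
    ∫ t in Ioi 0, (c ^ 2 + t ^ 2)⁻¹ = π / (2 * c) := by
  have h := integral_comp_mul_left_Ioi (fun x ↦ (1 + x ^ 2)⁻¹) 0 (inv_pos.2 hc)
  rw [mul_zero, integral_Ioi_inv_one_add_sq, arctan_zero, sub_zero, smul_eq_mul, inv_inv] at h
  calc ∫ t in Ioi 0, (c ^ 2 + t ^ 2)⁻¹ = ∫ t in Ioi 0, (c ^ 2)⁻¹ * (1 + (c⁻¹ * t) ^ 2)⁻¹ := by
        refine setIntegral_congr_fun measurableSet_Ioi fun t _ ↦ ?_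
        field_simp
    _ = π / (2 * c) := by
        rw [integral_const_mul, h]
        field_simp

lemma agmIntegrand_nonneg (a b t : ℝ) : 0 ≤ agmIntegrand a b t := by
  unfold agmIntegrand; positivity

lemma agmIntegrand_abs (a b t : ℝ) : agmIntegrand a b |t| = agmIntegrand a b t := by
  simp only [agmIntegrand, sq_abs]

lemma agmIntegrand_self (c t : ℝ) : agmIntegrand c c t = (c ^ 2 + t ^ 2)⁻¹ := by
  rw [agmIntegrand, ← sq, sqrt_sq (by positivity), one_div]

lemma agmIntegral_self (hc : 0 < c) : agmIntegral c c = π / (2 * c) := by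
  simp only [agmIntegral, agmIntegrand_self, integral_Ioi_inv_sq_add_sq hc]

lemma agmIntegrand_anti {a' b' : ℝ} (ha' : 0 < a') (hb' : 0 < b') (haa : a' ≤ a) (hbb : b' ≤ b)
    (t : ℝ) : agmIntegrand a b t ≤ agmIntegrand a' b' t := by
  unfold agmIntegrand
  gcongr

lemma integrable_agmIntegrand (ha : 0 < a) (hb : 0 < b) : Integrable (agmIntegrand a b) := by
  refine (integrable_inv_sq_add_sq (lt_min ha hb).ne').mono'
    (Measurable.aestronglyMeasurable (by unfold agmIntegrand; fun_prop)) (ae_of_all _ fun t ↦ ?_)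
  rw [norm_of_nonneg (agmIntegrand_nonneg a b t), ← agmIntegrand_self]
  exact agmIntegrand_anti (lt_min ha hb) (lt_min ha hb) (min_le_left a b) (min_le_right a b) t

lemma agmIntegral_anti {a' b' : ℝ} (ha' : 0 < a') (hb' : 0 < b') (haa : a' ≤ a) (hbb : b' ≤ b) :
    agmIntegral a b ≤ agmIntegral a' b' :=
  setIntegral_mono (integrable_agmIntegrand (ha'.trans_le haa) (hb'.trans_le hbb)).integrableOn
    (integrable_agmIntegrand ha' hb').integrableOn (agmIntegrand_anti ha' hb' haa hbb)

end GaussIntegral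

section AGMStep

variable {a b c : ℝ}

lemma strictMonoOn_sub_div_self (hc : 0 ≤ c) : StrictMonoOn (fun t : ℝ ↦ (t - c / t) / 2) (Ioi 0) :=
  fun s hs t _ hst ↦ by
    have : c / t ≤ c / s := div_le_div_of_nonneg_left hc hs hst.le
    dsimp only
    linarith

lemma image_sub_div_self (hc : 0 < c) : (fun t : ℝ ↦ (t - c / t) / 2) '' Ioi 0 = univ := by
  refine eq_univ_of_forall fun u ↦ ?_
  have hr : √(u ^ 2 + c) ^ 2 = u ^ 2 + c := sq_sqrt (by positivity)
  have hu : |u| < √(u ^ 2 + c) := by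
    rw [← sqrt_sq_eq_abs]
    exact sqrt_lt_sqrt (sq_nonneg u) (by linarith)
  have ht : 0 < u + √(u ^ 2 + c) := by linarith [neg_abs_le u]
  refine ⟨u + √(u ^ 2 + c), ht, ?_⟩
  field_simp
  linear_combination hr

lemma agmIntegrand_agm_step (hab : 0 < a * b) {t : ℝ} (ht : 0 < t) :
    (1 + a * b / t ^ 2) / 2 * agmIntegrand ((a + b) / 2) √(a * b) ((t - a * b / t) / 2)
      = 2 * agmIntegrand a b t := by
  have hprod : (((a + b) / 2) ^ 2 + ((t - a * b / t) / 2) ^ 2)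
      * (√(a * b) ^ 2 + ((t - a * b / t) / 2) ^ 2)
      = ((a ^ 2 + t ^ 2) * (b ^ 2 + t ^ 2)) * ((t ^ 2 + a * b) / (4 * t ^ 2)) ^ 2 := by
    rw [sq_sqrt hab.le]
    field_simp
    ring
  have hP : 0 < √((a ^ 2 + t ^ 2) * (b ^ 2 + t ^ 2)) := sqrt_pos.2 (by positivity)
  rw [agmIntegrand, agmIntegrand, hprod, sqrt_mul (by positivity), sqrt_sq (by positivity)]
  field_simp
  ring

lemma agmIntegral_agm_step (hab : 0 < a * b) :
    agmIntegral ((a + b) / 2) √(a * b) = agmIntegral a b := by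
  have hderiv : ∀ t ∈ Ioi (0 : ℝ), HasDerivWithinAt (fun t ↦ (t - a * b / t) / 2)
      ((1 + a * b / t ^ 2) / 2) (Ioi 0) t := fun t ht ↦
    ((((hasDerivAt_id' t).sub ((hasDerivAt_inv ht.ne').const_mul (a * b))).div_const 2).congr_deriv
      (by ring)).hasDerivWithinAt
  have hsubst := integral_image_eq_integral_deriv_smul_of_monotoneOn measurableSet_Ioi hderiv
    (strictMonoOn_sub_div_self hab.le).monotoneOn (agmIntegrand ((a + b) / 2) √(a * b))
  have heven : ∫ t, agmIntegrand ((a + b) / 2) √(a * b) t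
      = 2 * agmIntegral ((a + b) / 2) √(a * b) := by
    rw [agmIntegral]
    simpa only [agmIntegrand_abs] using integral_comp_abs (f := agmIntegrand ((a + b) / 2) √(a * b))
  rw [image_sub_div_self hab, Measure.restrict_univ, heven, setIntegral_congr_fun measurableSet_Ioi
    fun t ht ↦ by rw [smul_eq_mul, agmIntegrand_agm_step hab ht],
    integral_const_mul] at hsubst
  exact mul_left_cancel₀ two_ne_zero hsubst

end AGMStep

section AGM

variable {a b : ℝ}

lemma agmPair_succ_fst (a b : ℝ) (n : ℕ) :
    (agmPair a b (n + 1)).1 = ((agmPair a b n).1 + (agmPair a b n).2) / 2 := rfl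

lemma agmPair_succ_snd (a b : ℝ) (n : ℕ) :
    (agmPair a b (n + 1)).2 = √((agmPair a b n).1 * (agmPair a b n).2) := rfl

lemma le_sqrt_mul_of_le {x y : ℝ} (hy : 0 ≤ y) (hyx : y ≤ x) : y ≤ √(x * y) :=
  (le_sqrt hy (mul_nonneg (hy.trans hyx) hy)).2 (by nlinarith)

lemma sqrt_mul_le_add_div_two {x y : ℝ} (hx : 0 ≤ x) (hy : 0 ≤ y) : √(x * y) ≤ (x + y) / 2 :=
  sqrt_le_iff.2 ⟨by positivity, by nlinarith [sq_nonneg (x - y)]⟩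

lemma agmPair_snd_pos_and_le_fst (hb : 0 < b) (hba : b ≤ a) (n : ℕ) :
    0 < (agmPair a b n).2 ∧ (agmPair a b n).2 ≤ (agmPair a b n).1 := by
  induction n with
  | zero => exact ⟨hb, hba⟩
  | succ n ih =>
    obtain ⟨hpos, hle⟩ := ih
    rw [agmPair_succ_fst, agmPair_succ_snd]
    exact ⟨sqrt_pos.2 (mul_pos (hpos.trans_le hle) hpos),
      sqrt_mul_le_add_div_two (hpos.le.trans hle) hpos.le⟩

lemma monotone_agmPair_snd (hb : 0 < b) (hba : b ≤ a) : Monotone fun n ↦ (agmPair a b n).2 :=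
  monotone_nat_of_le_succ fun n ↦ by
    obtain ⟨hpos, hle⟩ := agmPair_snd_pos_and_le_fst hb hba n
    exact le_sqrt_mul_of_le hpos.le hle

lemma antitone_agmPair_fst (hb : 0 < b) (hba : b ≤ a) : Antitone fun n ↦ (agmPair a b n).1 :=
  antitone_nat_of_succ_le fun n ↦ by
    have hle := (agmPair_snd_pos_and_le_fst hb hba n).2
    simp only [agmPair_succ_fst]
    linarith

lemma agmPair_fst_sub_snd_le (hb : 0 < b) (hba : b ≤ a) (n : ℕ) :
    (agmPair a b n).1 - (agmPair a b n).2 ≤ (a - b) / 2 ^ n := by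
  induction n with
  | zero => simp [agmPair]
  | succ n ih =>
    have hmono := monotone_agmPair_snd hb hba n.le_succ
    simp only [agmPair_succ_fst] at hmono ⊢
    rw [pow_succ, ← div_div]
    linarith

lemma tendsto_agmPair_fst (hb : 0 < b) (hba : b ≤ a) :
    Tendsto (fun n ↦ (agmPair a b n).1) atTop (𝓝 (agm a b)) := by
  have hbdd : BddBelow (range fun n ↦ (agmPair a b n).1) := by
    refine ⟨0, ?_⟩
    rintro _ ⟨n, rfl⟩
    obtain ⟨hpos, hle⟩ := agmPair_snd_pos_and_le_fst hb hba n
    exact hpos.le.trans hle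
  have h := tendsto_atTop_ciInf (antitone_agmPair_fst hb hba) hbdd
  rwa [agm, h.limUnder_eq]

lemma tendsto_agmPair_snd (hb : 0 < b) (hba : b ≤ a) :
    Tendsto (fun n ↦ (agmPair a b n).2) atTop (𝓝 (agm a b)) := by
  have hgap : Tendsto (fun n ↦ (agmPair a b n).1 - (agmPair a b n).2) atTop (𝓝 0) :=
    squeeze_zero (fun n ↦ sub_nonneg.2 (agmPair_snd_pos_and_le_fst hb hba n).2)
      (agmPair_fst_sub_snd_le hb hba)
      (tendsto_const_nhds.div_atTop (tendsto_pow_atTop_atTop_of_one_lt one_lt_two))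
  simpa using (tendsto_agmPair_fst hb hba).sub hgap

lemma agm_pos (hb : 0 < b) (hba : b ≤ a) : 0 < agm a b :=
  hb.trans_le ((monotone_agmPair_snd hb hba).ge_of_tendsto (tendsto_agmPair_snd hb hba) 0)

end AGM

theorem agmIntegral_eq_pi_div_agm {a b : ℝ} (hb : 0 < b) (hba : b ≤ a) :
    agmIntegral a b = π / (2 * agm a b) := by
  have hbounds := agmPair_snd_pos_and_le_fst hb hba
  have hinv : ∀ n, agmIntegral (agmPair a b n).1 (agmPair a b n).2 = agmIntegral a b := fun n ↦ by
    induction n with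
    | zero => rfl
    | succ n ih =>
      obtain ⟨hpos, hle⟩ := hbounds n
      rw [← ih, agmPair_succ_fst, agmPair_succ_snd,
        agmIntegral_agm_step (mul_pos (hpos.trans_le hle) hpos)]
  have hlow : ∀ n, π / (2 * (agmPair a b n).1) ≤ agmIntegral a b := fun n ↦ by
    obtain ⟨hpos, hle⟩ := hbounds n
    rw [← hinv n, ← agmIntegral_self (hpos.trans_le hle)]
    exact agmIntegral_anti (hpos.trans_le hle) hpos le_rfl hle
  have hup : ∀ n, agmIntegral a b ≤ π / (2 * (agmPair a b n).2) := fun n ↦ by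
    obtain ⟨hpos, hle⟩ := hbounds n
    rw [← hinv n, ← agmIntegral_self hpos]
    exact agmIntegral_anti hpos hpos hle le_rfl
  have hM : 2 * agm a b ≠ 0 := mul_ne_zero two_ne_zero (agm_pos hb hba).ne'
  exact tendsto_nhds_unique tendsto_const_nhds <| tendsto_of_tendsto_of_tendsto_of_le_of_le
    (tendsto_const_nhds.div ((tendsto_agmPair_fst hb hba).const_mul 2) hM)
    (tendsto_const_nhds.div ((tendsto_agmPair_snd hb hba).const_mul 2) hM) hlow hup

lemma integral_inv_sqrt_sq_mul_cos_sq_add_sq_mul_sin_sq (a : ℝ) {b : ℝ} (hb : 0 < b) :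
    ∫ s in (0 : ℝ)..(π / 2), 1 / √(a ^ 2 * cos s ^ 2 + b ^ 2 * sin s ^ 2) = agmIntegral a b := by
  have hcos : ∀ s ∈ Ioo (0 : ℝ) (π / 2), 0 < cos s := fun s hs ↦
    cos_pos_of_mem_Ioo ⟨by linarith [hs.1, pi_pos], hs.2⟩
  have hderiv : ∀ s ∈ Ioo (0 : ℝ) (π / 2),
      HasDerivWithinAt (fun s ↦ b * tan s) (b * (1 / cos s ^ 2)) (Ioo 0 (π / 2)) s :=
    fun s hs ↦ ((hasDerivAt_tan (hcos s hs).ne').const_mul b).hasDerivWithinAt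
  have hmono : StrictMonoOn (fun s ↦ b * tan s) (Ioo 0 (π / 2)) := fun x hx y hy hxy ↦
    mul_lt_mul_of_pos_left (strictMonoOn_tan ⟨by linarith [hx.1, pi_pos], hx.2⟩
      ⟨by linarith [hy.1, pi_pos], hy.2⟩ hxy) hb
  have himage : (fun s ↦ b * tan s) '' Ioo 0 (π / 2) = Ioi 0 := by
    refine Subset.antisymm ?_ fun t ht ↦ ?_
    · rintro _ ⟨s, hs, rfl⟩
      exact mul_pos hb (tan_pos_of_pos_of_lt_pi_div_two hs.1 hs.2)
    · refine ⟨arctan (t / b), ⟨arctan_pos.2 (div_pos ht hb), arctan_lt_pi_div_two _⟩, ?_⟩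
      simp only [tan_arctan]
      field_simp
  have hsubst := integral_image_eq_integral_deriv_smul_of_monotoneOn measurableSet_Ioo hderiv
    hmono.monotoneOn (agmIntegrand a b)
  rw [himage] at hsubst
  rw [agmIntegral, hsubst, intervalIntegral.integral_of_le (by positivity),
    integral_Ioc_eq_integral_Ioo]
  refine setIntegral_congr_fun measurableSet_Ioo fun s hs ↦ ?_
  have hc := hcos s hs
  have hD : 0 < a ^ 2 * cos s ^ 2 + b ^ 2 * sin s ^ 2 := by
    have := sin_pos_of_pos_of_lt_pi hs.1 (by linarith [hs.2, pi_pos])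
    positivity
  have hprod : (a ^ 2 + (b * tan s) ^ 2) * (b ^ 2 + (b * tan s) ^ 2)
      = (a ^ 2 * cos s ^ 2 + b ^ 2 * sin s ^ 2) * (b / cos s ^ 2) ^ 2 := by
    rw [tan_eq_sin_div_cos]
    field_simp
    exact cos_sq_add_sin_sq s
  rw [smul_eq_mul, agmIntegrand, hprod, sqrt_mul hD.le, sqrt_sq (by positivity)]
  have := sqrt_pos.2 hD
  field_simp

section ArccosSubstitution

variable {c : ℝ}

lemma strictAntiOn_arccos_mul_sin (hc0 : 0 < c) (hc1 : c ≤ 1) :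
    StrictAntiOn (fun s ↦ arccos (c * sin s)) (Icc 0 (π / 2)) := by
  have hmem : ∀ s ∈ Icc 0 (π / 2), c * sin s ∈ Icc (-1 : ℝ) 1 := fun s hs ↦ by
    have := sin_nonneg_of_nonneg_of_le_pi hs.1 (by linarith [hs.2, pi_pos])
    exact ⟨by nlinarith, mul_le_one₀ hc1 this (sin_le_one s)⟩
  intro x hx y hy hxy
  refine strictAntiOn_arccos (hmem x hx) (hmem y hy) (mul_lt_mul_of_pos_left ?_ hc0)
  exact strictMonoOn_sin ⟨by linarith [hx.1, pi_pos], hx.2⟩ ⟨by linarith [hy.1, pi_pos], hy.2⟩ hxy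

lemma image_arccos_mul_sin (hc0 : 0 < c) (hc1 : c ≤ 1) :
    (fun s ↦ arccos (c * sin s)) '' Ioo 0 (π / 2) = Ioo (arccos c) (π / 2) := by
  rw [ContinuousOn.image_Ioo_of_strictAntiOn (by positivity) (by fun_prop)
    (strictAntiOn_arccos_mul_sin hc0 hc1)]
  simp

theorem integral_inv_sqrt_sq_sub_cos_sq (hc0 : 0 < c) (hc1 : c ≤ 1) :
    ∫ x in arccos c..(π / 2), 1 / √(c ^ 2 - cos x ^ 2)
      = ∫ s in (0 : ℝ)..(π / 2), 1 / √(1 - c ^ 2 * sin s ^ 2) := by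
  have hsin : ∀ s ∈ Ioo (0 : ℝ) (π / 2), 0 < sin s ∧ sin s < 1 := fun s hs ↦
    ⟨sin_pos_of_pos_of_lt_pi hs.1 (by linarith [hs.2, pi_pos]), by
      simpa using strictMonoOn_sin ⟨by linarith [hs.1, pi_pos], hs.2.le⟩
        ⟨by linarith [pi_pos], le_rfl⟩ hs.2⟩
  have hcs : ∀ s ∈ Ioo (0 : ℝ) (π / 2), 0 < c * sin s ∧ c * sin s < 1 := fun s hs ↦ by
    obtain ⟨h0, h1⟩ := hsin s hs
    exact ⟨mul_pos hc0 h0, by nlinarith⟩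
  have hderiv : ∀ s ∈ Ioo (0 : ℝ) (π / 2), HasDerivWithinAt (fun s ↦ arccos (c * sin s))
      (-(1 / √(1 - (c * sin s) ^ 2)) * (c * cos s)) (Ioo 0 (π / 2)) s := fun s hs ↦ by
    obtain ⟨h0, h1⟩ := hcs s hs
    exact ((hasDerivAt_arccos (by linarith) h1.ne).comp s
      ((hasDerivAt_sin s).const_mul c)).hasDerivWithinAt
  have hsubst := integral_image_eq_integral_deriv_smul_of_antitoneOn measurableSet_Ioo hderiv
    ((strictAntiOn_arccos_mul_sin hc0 hc1).mono Ioo_subset_Icc_self).antitoneOn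
    (fun x ↦ 1 / √(c ^ 2 - cos x ^ 2))
  rw [image_arccos_mul_sin hc0 hc1] at hsubst
  rw [intervalIntegral.integral_of_le (arccos_le_pi_div_two.2 hc0.le),
    intervalIntegral.integral_of_le (by positivity), integral_Ioc_eq_integral_Ioo,
    integral_Ioc_eq_integral_Ioo, hsubst]
  refine setIntegral_congr_fun measurableSet_Ioo fun s hs ↦ ?_
  obtain ⟨h0, h1⟩ := hcs s hs
  have hcos : 0 < cos s := cos_pos_of_mem_Ioo ⟨by linarith [hs.1, pi_pos], hs.2⟩
  have hgap : c ^ 2 - cos (arccos (c * sin s)) ^ 2 = (c * cos s) ^ 2 := by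
    rw [cos_arccos (by linarith) h1.le]
    linear_combination (-c ^ 2) * sin_sq_add_cos_sq s
  have hroot : 0 < √(1 - c ^ 2 * sin s ^ 2) := sqrt_pos.2 (by nlinarith)
  rw [smul_eq_mul, hgap, sqrt_sq (by positivity), mul_pow]
  field_simp

theorem integral_inv_sqrt_sin_sq_sub_sq {h : ℝ} (h0 : 0 ≤ h) (h1 : h < 1) :
    ∫ x in arcsin h..(π / 2), 1 / √(sin x ^ 2 - h ^ 2)
      = ∫ s in (0 : ℝ)..(π / 2), 1 / √(1 - (1 - h ^ 2) * sin s ^ 2) := by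
  have hc : √(1 - h ^ 2) ^ 2 = 1 - h ^ 2 := sq_sqrt (by nlinarith)
  have hsub : ∀ x, sin x ^ 2 - h ^ 2 = √(1 - h ^ 2) ^ 2 - cos x ^ 2 := fun x ↦ by
    linear_combination sin_sq_add_cos_sq x - hc
  simp_rw [hsub, arcsin_eq_arccos h0]
  rw [integral_inv_sqrt_sq_sub_cos_sq (sqrt_pos.2 (by nlinarith)) (sqrt_le_one.2 (by nlinarith)),
    hc]

end ArccosSubstitution

/-- The period function `T(h) = 4∫_{arcsin h}^{π/2} dx/√(sin²x - h²)` of the Taylor–Green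
streamline equals the complete elliptic integral `4∫_0^{π/2} ds/√(1-(1-h²)sin²s)`, which by
Gauss's theorem equals `2π / M(1,h)`, where `M` is the arithmetic–geometric mean. -/
theorem stmt_11 (h : ℝ) (hh : h ∈ Set.Ioo (0 : ℝ) 1) :
    (4 * ∫ x in Real.arcsin h..(Real.pi / 2), 1 / Real.sqrt (Real.sin x ^ 2 - h ^ 2)
        = 4 * ∫ s in (0 : ℝ)..(Real.pi / 2),
            1 / Real.sqrt (1 - (1 - h ^ 2) * Real.sin s ^ 2))
    ∧ (4 * ∫ s in (0 : ℝ)..(Real.pi / 2), 1 / Real.sqrt (1 - (1 - h ^ 2) * Real.sin s ^ 2)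
        = 2 * Real.pi / agm 1 h) := by
  obtain ⟨h0, h1⟩ := hh
  have hmodulus : ∀ s, 1 - (1 - h ^ 2) * sin s ^ 2 = 1 ^ 2 * cos s ^ 2 + h ^ 2 * sin s ^ 2 :=
    fun s ↦ by rw [cos_sq']; ring
  refine ⟨by rw [integral_inv_sqrt_sin_sq_sub_sq h0.le h1], ?_⟩
  simp_rw [hmodulus]
  rw [integral_inv_sqrt_sq_mul_cos_sq_add_sq_mul_sin_sq 1 h0, agmIntegral_eq_pi_div_agm h0 h1.le]
  ring
end

section
/- Let X be a Hilbert space with orthogonal decomposition X = V_s ⊕ V_u invariant for a bounded self-adjoint operator H, with b₁ := inf{⟨Hω,ω⟩ : ω ∈ V_s, ‖ω‖=1} > 0 and b₂ := sup{|⟨Hω,ω⟩| : ω ∈ V_u, ‖ω‖=1} < ∞. Let P be an orthogonal projection with ‖Pω‖² ≥ b₃‖ω‖² for all ω ∈ V_u, where b₃ ∈ (0,1]. If (1-b₃)b₂ < b₃² b₁, then any f = u + s with u ∈ V_u, s ∈ V_s satisfying ⟨Hf, f⟩ = 0 and Pf = 0 must be zero. -/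
/-!
Because `V_u ⟂ V_s` are `H`-invariant, `⟪H f, f⟫ = 0` splits as `⟪H u, u⟫ = -⟪H s, s⟫`, whence
`b₁‖s‖² ≤ b₂‖u‖²`. Because `P` is an orthogonal projection and `P u = -P s`,
`‖P u‖² = ⟪s, u - P u⟫ ≤ ‖s‖ √(1 - b₃) ‖u‖`, whence `b₃²‖u‖² ≤ (1 - b₃)‖s‖²`.
Chaining the two estimates, `(1 - b₃) b₂ < b₃² b₁` forces `u = 0`, and then `s = 0`.
-/

open scoped InnerProductSpace

section

variable {X : Type*} [NormedAddCommGroup X] [InnerProductSpace ℝ X]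

theorem LinearMap.inner_map_add_add_of_isOrtho {H : X →ₗ[ℝ] X} {U V : Submodule ℝ X}
    (hUV : U ⟂ V) {u v : X} (hu : u ∈ U) (hv : v ∈ V) (hHu : H u ∈ U) (hHv : H v ∈ V) :
    ⟪H (u + v), u + v⟫_ℝ = ⟪H u, u⟫_ℝ + ⟪H v, v⟫_ℝ := by
  have huv : ⟪H u, v⟫_ℝ = 0 := hUV.inner_eq hHu hv
  have hvu : ⟪H v, u⟫_ℝ = 0 := hUV.symm.inner_eq hHv hu
  simp only [map_add, inner_add_left, inner_add_right, huv, hvu]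
  ring

namespace LinearMap.IsSymmetricProjection

variable {P : X →ₗ[ℝ] X} (hP : P.IsSymmetricProjection)
include hP

theorem map_map (x : X) : P (P x) = P x :=
  LinearMap.congr_fun hP.isIdempotentElem.eq x

theorem inner_map_self_eq_norm_sq (x : X) : ⟪P x, x⟫_ℝ = ‖P x‖ ^ 2 :=
  calc ⟪P x, x⟫_ℝ = ⟪P (P x), x⟫_ℝ := by rw [hP.map_map]
    _ = ⟪P x, P x⟫_ℝ := hP.isSymmetric _ _
    _ = ‖P x‖ ^ 2 := real_inner_self_eq_norm_sq _

theorem norm_sub_map_sq (x : X) : ‖x - P x‖ ^ 2 = ‖x‖ ^ 2 - ‖P x‖ ^ 2 := by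
  rw [norm_sub_sq_real, real_inner_comm, hP.inner_map_self_eq_norm_sq]
  ring

theorem norm_map_sq_le_of_map_add_eq_zero {u s : X} (hus : ⟪u, s⟫_ℝ = 0)
    (h : P (u + s) = 0) : ‖P u‖ ^ 2 ≤ ‖s‖ * ‖u - P u‖ := by
  have hPu : P u = -P s := eq_neg_of_add_eq_zero_left (by rwa [← map_add])
  calc ‖P u‖ ^ 2 = ⟪P u, u⟫_ℝ := (hP.inner_map_self_eq_norm_sq u).symm
    _ = ⟪s, u - P u⟫_ℝ := by
      rw [inner_sub_right, real_inner_comm u s, hus, hPu, inner_neg_left, inner_neg_right,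
        hP.isSymmetric, hPu, inner_neg_right]
      ring
    _ ≤ ‖s‖ * ‖u - P u‖ := real_inner_le_norm s _

theorem sq_mul_norm_sq_le_of_map_add_eq_zero {u s : X} (hus : ⟪u, s⟫_ℝ = 0)
    (h : P (u + s) = 0) {b : ℝ} (hb₀ : 0 ≤ b) (hb₁ : b ≤ 1) (hb : b * ‖u‖ ^ 2 ≤ ‖P u‖ ^ 2) :
    b ^ 2 * ‖u‖ ^ 2 ≤ (1 - b) * ‖s‖ ^ 2 := by
  have hsub : ‖u - P u‖ ^ 2 ≤ (1 - b) * ‖u‖ ^ 2 := by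
    rw [hP.norm_sub_map_sq]; linarith
  have hsq : (b * ‖u‖ ^ 2) ^ 2 ≤ ‖s‖ ^ 2 * ((1 - b) * ‖u‖ ^ 2) :=
    calc (b * ‖u‖ ^ 2) ^ 2 ≤ (‖s‖ * ‖u - P u‖) ^ 2 := by
          have := hb.trans (hP.norm_map_sq_le_of_map_add_eq_zero hus h)
          gcongr
      _ = ‖s‖ ^ 2 * ‖u - P u‖ ^ 2 := by ring
      _ ≤ ‖s‖ ^ 2 * ((1 - b) * ‖u‖ ^ 2) := by gcongr
  rcases (norm_nonneg u).eq_or_lt with hu | hu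
  · rw [← hu]; nlinarith [sq_nonneg ‖s‖]
  · nlinarith [pow_pos hu 2]

end LinearMap.IsSymmetricProjection

end

theorem stmt_13_general {X : Type*} [NormedAddCommGroup X] [InnerProductSpace ℝ X]
    (Vs Vu : Submodule ℝ X)
    (horth : ∀ u ∈ Vu, ∀ s ∈ Vs, (inner ℝ u s : ℝ) = 0)
    (H : X →L[ℝ] X)
    (hinvs : ∀ v ∈ Vs, H v ∈ Vs) (hinvu : ∀ v ∈ Vu, H v ∈ Vu)
    (b₁ b₂ b₃ : ℝ) (hb₁pos : 0 < b₁)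
    (hb₁ : ∀ ω ∈ Vs, b₁ * ‖ω‖ ^ 2 ≤ (inner ℝ (H ω) ω : ℝ))
    (hb₂ : ∀ ω ∈ Vu, |(inner ℝ (H ω) ω : ℝ)| ≤ b₂ * ‖ω‖ ^ 2)
    (P : X →L[ℝ] X)
    (hPidem : ∀ x, P (P x) = P x)
    (hPsa : ∀ x y : X, (inner ℝ (P x) y : ℝ) = inner ℝ x (P y))
    (hb₃pos : 0 < b₃) (hb₃le : b₃ ≤ 1)
    (hb₃ : ∀ ω ∈ Vu, b₃ * ‖ω‖ ^ 2 ≤ ‖P ω‖ ^ 2)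
    (hcond : (1 - b₃) * b₂ < b₃ ^ 2 * b₁)
    (u s : X) (hu : u ∈ Vu) (hs : s ∈ Vs)
    (hform : (inner ℝ (H (u + s)) (u + s) : ℝ) = 0)
    (hP : P (u + s) = 0) :
    u + s = 0 := by
  have hproj : (P : X →ₗ[ℝ] X).IsSymmetricProjection := ⟨LinearMap.ext hPidem, hPsa⟩
  have hsplit : ⟪H u, u⟫_ℝ + ⟪H s, s⟫_ℝ = 0 := by
    rw [← hform]
    exact ((H : X →ₗ[ℝ] X).inner_map_add_add_of_isOrtho (Submodule.isOrtho_iff_inner_eq.2 horth)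
      hu hs (hinvu u hu) (hinvs s hs)).symm
  have hs_le : b₁ * ‖s‖ ^ 2 ≤ b₂ * ‖u‖ ^ 2 := by
    linarith [hb₁ s hs, neg_abs_le ⟪H u, u⟫_ℝ, hb₂ u hu]
  have hu_le : b₃ ^ 2 * ‖u‖ ^ 2 ≤ (1 - b₃) * ‖s‖ ^ 2 :=
    hproj.sq_mul_norm_sq_le_of_map_add_eq_zero (horth u hu s hs) hP hb₃pos.le hb₃le (hb₃ u hu)
  have hu0 : u = 0 := by
    have : ‖u‖ ^ 2 ≤ 0 := by
      nlinarith [mul_le_mul_of_nonneg_left hu_le hb₁pos.le,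
        mul_le_mul_of_nonneg_left hs_le (sub_nonneg.2 hb₃le)]
    simpa using this
  have hs0 : s = 0 := by
    rw [hu0, norm_zero] at hs_le
    have : ‖s‖ ^ 2 ≤ 0 := by nlinarith
    simpa using this
  simp [hu0, hs0]

/-- Key coercivity estimate for orbital stability: with `X = V_s ⊕ V_u` orthogonal and
`H`-invariant, `b₁` a lower bound for `⟨H·,·⟩` on `V_s`, `b₂` an upper bound for `|⟨H·,·⟩|`
on `V_u`, `P` an orthogonal projection with `‖Pω‖² ≥ b₃‖ω‖²` on `V_u`, and
`(1-b₃)b₂ < b₃²b₁`, any `f = u + s` with `⟨Hf,f⟩ = 0` and `Pf = 0` vanishes. -/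
theorem stmt_13 {X : Type*} [NormedAddCommGroup X] [InnerProductSpace ℝ X]
    (Vs Vu : Submodule ℝ X)
    (horth : ∀ u ∈ Vu, ∀ s ∈ Vs, (inner ℝ u s : ℝ) = 0)
    (H : X →L[ℝ] X)
    (hH : ∀ f g : X, (inner ℝ (H f) g : ℝ) = inner ℝ f (H g))
    (hinvs : ∀ v ∈ Vs, H v ∈ Vs) (hinvu : ∀ v ∈ Vu, H v ∈ Vu)
    (b₁ b₂ b₃ : ℝ) (hb₁pos : 0 < b₁)
    (hb₁ : ∀ ω ∈ Vs, b₁ * ‖ω‖ ^ 2 ≤ (inner ℝ (H ω) ω : ℝ))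
    (hb₂ : ∀ ω ∈ Vu, |(inner ℝ (H ω) ω : ℝ)| ≤ b₂ * ‖ω‖ ^ 2)
    (P : X →L[ℝ] X)
    (hPidem : ∀ x, P (P x) = P x)
    (hPsa : ∀ x y : X, (inner ℝ (P x) y : ℝ) = inner ℝ x (P y))
    (hb₃pos : 0 < b₃) (hb₃le : b₃ ≤ 1)
    (hb₃ : ∀ ω ∈ Vu, b₃ * ‖ω‖ ^ 2 ≤ ‖P ω‖ ^ 2)
    (hcond : (1 - b₃) * b₂ < b₃ ^ 2 * b₁)
    (u s : X) (hu : u ∈ Vu) (hs : s ∈ Vs)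
    (hform : (inner ℝ (H (u + s)) (u + s) : ℝ) = 0)
    (hP : P (u + s) = 0) :
    u + s = 0 :=
  stmt_13_general Vs Vu horth H hinvs hinvu b₁ b₂ b₃ hb₁pos hb₁ hb₂ P hPidem hPsa hb₃pos hb₃le hb₃
    hcond u s hu hs hform hP
end

section
/- Let X be a Hilbert space, J skew-adjoint and H = H_s + H_u bounded self-adjoint, with H_s self-adjoint and coercive (⟨H_s f, f⟩ ≥ c‖f‖² for some c > 0), H_u of finite rank with range V_u, and H_s, H_u commuting. Set T = H_s^{1/2} J H_s^{1/2}. For λ with Re(λ) ≠ 0, define M_λ = Id + H_u H_s⁻¹ (T - λ)⁻¹ T on V_u. Then the maps f ↦ H_u H_s^{-1/2} f and z ↦ -H_s^{-1/2}(T - λ)⁻¹ T z are mutually inverse linear isomorphisms between Ker(JH - λ) and Ker(M_λ). In particular λ is an eigenvalue of JH with Re(λ) ≠ 0 if and only if det(M_λ) = 0. -/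
/-!
Write `H_s = S²` and `H_s⁻¹ = S⁻¹ S⁻¹`. Applying `S` to `J (H_s + H_u) f = μ f` and moving `S`
past `H_u` turns it into `(T - μ) (S f) = -T (H_u S⁻¹ f)`, i.e. `S f = -(T - μ)⁻¹ T (H_u S⁻¹ f)`.
Hence `f` is recovered from `z = H_u S⁻¹ f` as `-S⁻¹ (T - μ)⁻¹ T z`, and applying `H_u S⁻¹` to
that identity gives `z + H_u H_s⁻¹ (T - μ)⁻¹ T z = 0`; conversely any such `z` defines an
eigenvector this way.
-/

namespace HamiltonianEigen

variable {𝕜 X : Type*} [Semiring 𝕜] [AddCommGroup X] [Module 𝕜 X]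
  {J S Sinv Hu T R : X →ₗ[𝕜] X} {μ : 𝕜}

theorem resolvent_apply_eq_neg_iff (hR1 : ∀ f, T (R f) - μ • R f = f)
    (hR2 : ∀ f, R (T f - μ • f) = f) (g w : X) :
    R (T w) = -g ↔ T g - μ • g = -T w := by
  constructor
  · intro h
    rw [← neg_neg g, ← h, map_neg, smul_neg, sub_neg_eq_add, neg_add_eq_sub, ← neg_sub, hR1]
  · intro h
    rw [← neg_neg (T w), ← h, map_neg, hR2]

theorem eigen_iff_sub_smul_eq_neg (hSinv : ∀ f, S (Sinv f) = f)
    (hSinv' : ∀ f, Sinv (S f) = f) (hScomm : ∀ f, S (Hu f) = Hu (S f))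
    (hT : ∀ f, T f = S (J (S f))) (f : X) :
    J (S (S f) + Hu f) = μ • f ↔ T (S f) - μ • S f = -T (Hu (Sinv f)) := by
  have hTHu : T (Hu (Sinv f)) = S (J (Hu f)) := by rw [hT, hScomm, hSinv]
  rw [hTHu, hT, sub_eq_iff_eq_add, neg_add_eq_sub, eq_sub_iff_add_eq, ← map_add, ← map_add,
    ← map_smul, (Function.LeftInverse.injective hSinv').eq_iff]

theorem eigen_iff_resolvent_eq_neg (hSinv : ∀ f, S (Sinv f) = f) (hSinv' : ∀ f, Sinv (S f) = f)
    (hScomm : ∀ f, S (Hu f) = Hu (S f)) (hT : ∀ f, T f = S (J (S f)))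
    (hR1 : ∀ f, T (R f) - μ • R f = f) (hR2 : ∀ f, R (T f - μ • f) = f) (f : X) :
    J (S (S f) + Hu f) = μ • f ↔ R (T (Hu (Sinv f))) = -S f := by
  rw [eigen_iff_sub_smul_eq_neg hSinv hSinv' hScomm hT, resolvent_apply_eq_neg_iff hR1 hR2]

theorem neg_inv_resolvent_eq_of_eigen (hSinv : ∀ f, S (Sinv f) = f)
    (hSinv' : ∀ f, Sinv (S f) = f) (hScomm : ∀ f, S (Hu f) = Hu (S f))
    (hT : ∀ f, T f = S (J (S f))) (hR1 : ∀ f, T (R f) - μ • R f = f)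
    (hR2 : ∀ f, R (T f - μ • f) = f) {f : X} (hf : J (S (S f) + Hu f) = μ • f) :
    -Sinv (R (T (Hu (Sinv f)))) = f := by
  rw [(eigen_iff_resolvent_eq_neg hSinv hSinv' hScomm hT hR1 hR2 f).1 hf, map_neg, neg_neg, hSinv']

theorem add_resolvent_eq_zero_of_eigen (hSinv : ∀ f, S (Sinv f) = f)
    (hSinv' : ∀ f, Sinv (S f) = f) (hScomm : ∀ f, S (Hu f) = Hu (S f))
    (hT : ∀ f, T f = S (J (S f))) (hR1 : ∀ f, T (R f) - μ • R f = f)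
    (hR2 : ∀ f, R (T f - μ • f) = f) {f : X} (hf : J (S (S f) + Hu f) = μ • f) :
    Hu (Sinv f) + Hu (Sinv (Sinv (R (T (Hu (Sinv f)))))) = 0 := by
  rw [(eigen_iff_resolvent_eq_neg hSinv hSinv' hScomm hT hR1 hR2 f).1 hf, map_neg, map_neg, hSinv',
    map_neg, add_neg_cancel]

theorem apply_inv_neg_inv_eq_of_add_eq_zero {z r : X} (hz : z + Hu (Sinv (Sinv r)) = 0) :
    Hu (Sinv (-Sinv r)) = z := by
  rw [map_neg, map_neg, neg_eq_iff_eq_neg]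
  exact eq_neg_of_add_eq_zero_right hz

theorem eigen_of_add_resolvent_eq_zero (hSinv : ∀ f, S (Sinv f) = f)
    (hSinv' : ∀ f, Sinv (S f) = f) (hScomm : ∀ f, S (Hu f) = Hu (S f))
    (hT : ∀ f, T f = S (J (S f))) (hR1 : ∀ f, T (R f) - μ • R f = f)
    (hR2 : ∀ f, R (T f - μ • f) = f) {z : X} (hz : z + Hu (Sinv (Sinv (R (T z)))) = 0) :
    J (S (S (-Sinv (R (T z)))) + Hu (-Sinv (R (T z)))) = μ • -Sinv (R (T z)) := by
  rw [eigen_iff_resolvent_eq_neg hSinv hSinv' hScomm hT hR1 hR2,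
    apply_inv_neg_inv_eq_of_add_eq_zero hz, map_neg, hSinv, neg_neg]

end HamiltonianEigen

open HamiltonianEigen

theorem stmt_15_general {X : Type*} [NormedAddCommGroup X] [InnerProductSpace ℂ X]
    (J : X →ₗ[ℂ] X)
    (Hs Hu : X →L[ℂ] X)
    (S : X →L[ℂ] X)
    (hSsq : ∀ f, S (S f) = Hs f)
    (hScomm : ∀ f, S (Hu f) = Hu (S f))
    (Sinv : X →L[ℂ] X) (hSinv : ∀ f, S (Sinv f) = f) (hSinv' : ∀ f, Sinv (S f) = f)
    (Hsinv : X →L[ℂ] X) (hHsinv' : ∀ f, Hsinv (Hs f) = f)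
    (μ : ℂ)
    (T : X →ₗ[ℂ] X) (hT : ∀ f, T f = S (J (S f)))
    (R : X →ₗ[ℂ] X)
    (hR1 : ∀ f, T (R f) - μ • R f = f) (hR2 : ∀ f, R (T f - μ • f) = f) :
    (∀ f : X, J (Hs f + Hu f) = μ • f →
        Hu (Sinv f) + Hu (Hsinv (R (T (Hu (Sinv f))))) = 0)
    ∧ (∀ z : X, z ∈ LinearMap.range (Hu : X →ₗ[ℂ] X) → z + Hu (Hsinv (R (T z))) = 0 →
        J (Hs (-(Sinv (R (T z)))) + Hu (-(Sinv (R (T z)))))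
          = μ • (-(Sinv (R (T z)))))
    ∧ (∀ f : X, J (Hs f + Hu f) = μ • f →
        -(Sinv (R (T (Hu (Sinv f))))) = f)
    ∧ (∀ z : X, z ∈ LinearMap.range (Hu : X →ₗ[ℂ] X) → z + Hu (Hsinv (R (T z))) = 0 →
        Hu (Sinv (-(Sinv (R (T z))))) = z)
    ∧ ((∃ f : X, f ≠ 0 ∧ J (Hs f + Hu f) = μ • f)
        ↔ ∃ z : X, z ≠ 0 ∧ z ∈ LinearMap.range (Hu : X →ₗ[ℂ] X) ∧ z + Hu (Hsinv (R (T z))) = 0) := by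
  have hHsinv_eq : ∀ x, Hsinv x = Sinv (Sinv x) := fun x ↦ by
    rw [← hHsinv' (Sinv (Sinv x)), ← hSsq, hSinv, hSinv]
  simp only [← hSsq, hHsinv_eq]
  have recover_f := fun f ↦
    neg_inv_resolvent_eq_of_eigen (f := f) (J := J) hSinv hSinv' hScomm hT hR1 hR2
  have ker_of_eigen := fun f ↦
    add_resolvent_eq_zero_of_eigen (f := f) (J := J) hSinv hSinv' hScomm hT hR1 hR2
  have eigen_of_ker := fun z ↦
    eigen_of_add_resolvent_eq_zero (z := z) (J := J) hSinv hSinv' hScomm hT hR1 hR2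
  have recover_z := fun z r ↦ apply_inv_neg_inv_eq_of_add_eq_zero
    (Hu := (Hu : X →ₗ[ℂ] X)) (Sinv := (Sinv : X →ₗ[ℂ] X)) (z := z) (r := r)
  simp only [ContinuousLinearMap.coe_coe] at recover_f ker_of_eigen eigen_of_ker recover_z
  refine ⟨ker_of_eigen, fun z _ ↦ eigen_of_ker z, recover_f, fun z _ ↦ recover_z z _, ?_, ?_⟩
  · rintro ⟨f, hf0, hf⟩
    refine ⟨Hu (Sinv f), fun h0 ↦ hf0 ?_, ⟨Sinv f, rfl⟩, ker_of_eigen f hf⟩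
    rw [← recover_f f hf, h0, map_zero, map_zero, map_zero, neg_zero]
  · rintro ⟨z, hz0, -, hz⟩
    refine ⟨-Sinv (R (T z)), fun h0 ↦ hz0 ?_, eigen_of_ker z hz⟩
    rw [← recover_z z _ hz, h0, map_zero, map_zero]

/-- Finite-dimensional instability criterion for Hamiltonian operators `L = J(H_s + H_u)`:
with `J` skew-adjoint, `H_s` self-adjoint coercive with square root `S` and inverse `Hsinv`,
`H_u` self-adjoint of finite rank commuting with `H_s` (and with `S`), `T = S J S`, and
`R = (T - μ)⁻¹` for `Re μ ≠ 0`, the maps `f ↦ H_u S⁻¹ f` and `z ↦ -S⁻¹ (T - μ)⁻¹ T z` are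
mutually inverse isomorphisms between `Ker(L - μ)` and `Ker(M_μ)` where
`M_μ = Id + H_u H_s⁻¹ (T - μ)⁻¹ T` on `V_u = range H_u`; in particular `μ` is an eigenvalue
of `L` iff `M_μ` has nontrivial kernel in `V_u` (iff `det M_μ = 0`). -/
theorem stmt_15 {X : Type*} [NormedAddCommGroup X] [InnerProductSpace ℂ X] [CompleteSpace X]
    (J : X →ₗ[ℂ] X)
    (hJ : ∀ f g : X, (inner ℂ (J f) g : ℂ) = -inner ℂ f (J g))
    (Hs Hu : X →L[ℂ] X)
    (hHssa : ∀ f g : X, (inner ℂ (Hs f) g : ℂ) = inner ℂ f (Hs g))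
    (hHusa : ∀ f g : X, (inner ℂ (Hu f) g : ℂ) = inner ℂ f (Hu g))
    (c : ℝ) (hc : 0 < c)
    (hcoer : ∀ f : X, c * ‖f‖ ^ 2 ≤ ((inner ℂ (Hs f) f : ℂ)).re)
    (hfin : FiniteDimensional ℂ (LinearMap.range (Hu : X →ₗ[ℂ] X)))
    (hcomm : ∀ f, Hs (Hu f) = Hu (Hs f))
    (S : X →L[ℂ] X)
    (hSsa : ∀ f g : X, (inner ℂ (S f) g : ℂ) = inner ℂ f (S g))
    (hScoer : ∀ f : X, 0 < ((inner ℂ (S f) f : ℂ)).re ∨ f = 0)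
    (hSsq : ∀ f, S (S f) = Hs f)
    (hScomm : ∀ f, S (Hu f) = Hu (S f))
    (Sinv : X →L[ℂ] X) (hSinv : ∀ f, S (Sinv f) = f) (hSinv' : ∀ f, Sinv (S f) = f)
    (Hsinv : X →L[ℂ] X) (hHsinv : ∀ f, Hs (Hsinv f) = f) (hHsinv' : ∀ f, Hsinv (Hs f) = f)
    (μ : ℂ) (hμ : μ.re ≠ 0)
    (T : X →ₗ[ℂ] X) (hT : ∀ f, T f = S (J (S f)))
    (R : X →ₗ[ℂ] X)
    (hR1 : ∀ f, T (R f) - μ • R f = f) (hR2 : ∀ f, R (T f - μ • f) = f) :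
    (∀ f : X, J (Hs f + Hu f) = μ • f →
        Hu (Sinv f) + Hu (Hsinv (R (T (Hu (Sinv f))))) = 0)
    ∧ (∀ z : X, z ∈ LinearMap.range (Hu : X →ₗ[ℂ] X) → z + Hu (Hsinv (R (T z))) = 0 →
        J (Hs (-(Sinv (R (T z)))) + Hu (-(Sinv (R (T z)))))
          = μ • (-(Sinv (R (T z)))))
    ∧ (∀ f : X, J (Hs f + Hu f) = μ • f →
        -(Sinv (R (T (Hu (Sinv f))))) = f)
    ∧ (∀ z : X, z ∈ LinearMap.range (Hu : X →ₗ[ℂ] X) → z + Hu (Hsinv (R (T z))) = 0 →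
        Hu (Sinv (-(Sinv (R (T z))))) = z)
    ∧ ((∃ f : X, f ≠ 0 ∧ J (Hs f + Hu f) = μ • f)
        ↔ ∃ z : X, z ≠ 0 ∧ z ∈ LinearMap.range (Hu : X →ₗ[ℂ] X) ∧ z + Hu (Hsinv (R (T z))) = 0) :=
  stmt_15_general J Hs Hu S hSsq hScomm Sinv hSinv hSinv' Hsinv hHsinv' μ T hT R hR1 hR2
end

section
/- Suppose λ is an eigenvalue of the Taylor–Green linearized operator L = JH restricted to the invariant subspace (Ev_x Ev_y)^[odd]_+, with Re(λ) > 0, and with eigenfunction normalized as f = E_{1,0} + f₊ where f₊ ⊥ E_{1,0}. Given that ⟨Hf, f⟩ = 0, ⟨H E_{1,0}, E_{1,0}⟩ = -4π², ⟨Hf₊, f₊⟩ ≥ (3/5)‖f₊‖², J E_{1,0} = (i/2)E_{1,0} - (1/2)E_{2,1}, H E_{2,1} = -(3/5)E_{2,1}, ‖E_{1,0}‖² = 4π², and ‖E_{2,1}‖ = √2 π, then |λ + i/2| ≤ (3/10)√(5/6). -/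
/-!
Howard's semicircle argument. Pairing the eigenvalue equation `J H f = μ f` with `E₁₀` and
moving the skew `J` and the symmetric `H` across gives
`4π² μ = -⟪H J E₁₀, f⟫ = -(i/2) 4π² - (3/10) ⟪E₂₁, f₊⟫`, using that `E₂₁ ⊥ E₁₀` as eigenvectors
of `H` for different eigenvalues. By Cauchy–Schwarz `|μ + i/2|` is then controlled by `‖f₊‖`,
which is bounded by the vanishing of the energy `⟪H f, f⟫`: its `E₁₀` part is `-4π²` and its
`f₊` part is at least `(3/5) ‖f₊‖²`, whence `‖f₊‖² ≤ (5/3) 4π²`.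
-/

namespace LinearMap

variable {𝕜 E : Type*} [RCLike 𝕜] [NormedAddCommGroup E] [InnerProductSpace 𝕜 E]

local notation "⟪" x ", " y "⟫" => inner 𝕜 x y

namespace IsSymmetric

variable {T : E →ₗ[𝕜] E}

theorem inner_eq_zero_of_apply_eq_smul (hT : T.IsSymmetric) {u v : E} {a b : 𝕜}
    (hu : T u = a • u) (hv : T v = b • v) (hab : a ≠ b) : ⟪u, v⟫ = 0 :=
  hT.orthogonalFamily_eigenspaces hab ⟨u, Module.End.mem_eigenspace_iff.2 hu⟩
    ⟨v, Module.End.mem_eigenspace_iff.2 hv⟩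

theorem inner_map_add_add_of_apply_eq_smul (hT : T.IsSymmetric) {e g : E} {a : 𝕜}
    (he : T e = a • e) (heg : ⟪e, g⟫ = 0) :
    ⟪T (e + g), e + g⟫ = ⟪T e, e⟫ + ⟪T g, g⟫ := by
  have hge : ⟪g, e⟫ = 0 := inner_eq_zero_symm.1 heg
  have hTeg : ⟪T e, g⟫ = 0 := by rw [he, inner_smul_left, heg, mul_zero]
  have hTge : ⟪T g, e⟫ = 0 := by rw [hT, he, inner_smul_right, hge, mul_zero]
  rw [map_add, inner_add_left, inner_add_right, inner_add_right, hTeg, hTge]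
  ring

end IsSymmetric

theorem mul_inner_eq_neg_inner_map_map {J H : E →ₗ[𝕜] E}
    (hJ : ∀ a b, ⟪J a, b⟫ = -⟪a, J b⟫) (hH : H.IsSymmetric) {f : E} {μ : 𝕜}
    (heig : J (H f) = μ • f) (e : E) :
    μ * ⟪e, f⟫ = -⟪H (J e), f⟫ := by
  rw [← inner_smul_right, ← heig, hH, hJ, neg_neg]

end LinearMap

open Real Complex

theorem le_three_tenths_mul_sqrt_five_sixths {x y s : ℝ} (hx : 0 ≤ x)
    (hxy : 4 * π ^ 2 * x = 3 / 10 * y) (hy : y ≤ √2 * π * s) (hs : s ^ 2 ≤ 20 / 3 * π ^ 2) :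
    x ≤ 3 / 10 * √(5 / 6) := by
  have hy₀ : 0 ≤ y := by nlinarith [pi_pos]
  have hy_sq : y ^ 2 ≤ 2 * π ^ 2 * s ^ 2 :=
    calc y ^ 2 ≤ (√2 * π * s) ^ 2 := pow_le_pow_left₀ hy₀ hy 2
      _ = 2 * π ^ 2 * s ^ 2 := by rw [mul_pow, mul_pow, sq_sqrt zero_le_two]
  have hx_sq : x ^ 2 ≤ (3 / 10) ^ 2 * (5 / 6) := by
    have h : (4 * π ^ 2) ^ 2 * x ^ 2 ≤ (4 * π ^ 2) ^ 2 * ((3 / 10) ^ 2 * (5 / 6)) := by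
      rw [← mul_pow, hxy]; nlinarith
    exact le_of_mul_le_mul_left h (by positivity)
  rw [← sqrt_sq (by norm_num : (0 : ℝ) ≤ 3 / 10), ← sqrt_mul (by positivity)]
  exact le_sqrt_of_sq_le hx_sq

theorem stmt_18_general {X : Type*} [NormedAddCommGroup X] [InnerProductSpace ℂ X]
    (J H : X →ₗ[ℂ] X)
    (hJ : ∀ a b : X, (inner ℂ (J a) b : ℂ) = -inner ℂ a (J b))
    (hH : ∀ a b : X, (inner ℂ (H a) b : ℂ) = inner ℂ a (H b))
    (E₁₀ E₂₁ f fp : X) (μ : ℂ)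
    (hf : f = E₁₀ + fp)
    (hperp : (inner ℂ E₁₀ fp : ℂ) = 0)
    (hHf : (inner ℂ (H f) f : ℂ) = 0)
    (hHE10 : H E₁₀ = -E₁₀)
    (hHfp : 3 / 5 * ‖fp‖ ^ 2 ≤ ((inner ℂ (H fp) fp : ℂ)).re)
    (hJE10 : J E₁₀ = (Complex.I / 2) • E₁₀ - (1 / 2 : ℂ) • E₂₁)
    (hHE21 : H E₂₁ = (-(3 / 5) : ℂ) • E₂₁)
    (hnorm10 : ‖E₁₀‖ ^ 2 = 4 * Real.pi ^ 2)
    (hnorm21 : ‖E₂₁‖ = Real.sqrt 2 * Real.pi)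
    (heig : J (H f) = μ • f) :
    ‖μ + Complex.I / 2‖ ≤ 3 / 10 * Real.sqrt (5 / 6) := by
  have hH_symm : H.IsSymmetric := hH
  have hHE10_smul : H E₁₀ = (-1 : ℂ) • E₁₀ := by rw [hHE10, neg_one_smul]
  have hE10 : inner ℂ E₁₀ E₁₀ = (4 * π ^ 2 : ℂ) := by
    simpa [inner_self_eq_norm_sq_to_K] using congrArg ((↑) : ℝ → ℂ) hnorm10
  have hfp : ‖fp‖ ^ 2 ≤ 20 / 3 * π ^ 2 := by
    rw [hf, hH_symm.inner_map_add_add_of_apply_eq_smul hHE10_smul hperp, hHE10, inner_neg_left,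
      hE10, neg_add_eq_zero] at hHf
    rw [← hHf] at hHfp
    norm_cast at hHfp
    linarith
  have hE10f : inner ℂ E₁₀ f = (4 * π ^ 2 : ℂ) := by
    rw [hf, inner_add_right, hperp, add_zero, hE10]
  have hE21f : inner ℂ E₂₁ f = inner ℂ E₂₁ fp := by
    rw [hf, inner_add_right,
      hH_symm.inner_eq_zero_of_apply_eq_smul hHE21 hHE10_smul (by norm_num), zero_add]
  have hHJE10 : H (J E₁₀) = (-(I / 2)) • E₁₀ + (3 / 10 : ℂ) • E₂₁ := by
    rw [hJE10, map_sub, map_smul, map_smul, hHE10, hHE21]; module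
  have hkey : (4 * π ^ 2 : ℂ) * (μ + I / 2) = -(3 / 10) * inner ℂ E₂₁ fp := by
    have h := LinearMap.mul_inner_eq_neg_inner_map_map hJ hH_symm heig E₁₀
    rw [hHJE10, inner_add_left, inner_smul_left, inner_smul_left, hE10f, hE21f] at h
    simp only [map_neg, map_div₀, conj_I, map_ofNat] at h
    linear_combination h
  refine le_three_tenths_mul_sqrt_five_sixths (norm_nonneg _) ?_
    (hnorm21 ▸ norm_inner_le_norm (𝕜 := ℂ) E₂₁ fp) hfp
  simpa [abs_of_pos pi_pos] using congrArg norm hkey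

/-- Howard-type semicircle localization for the Taylor–Green unstable eigenvalue on
`(Ev_x Ev_y)^[odd]_+`: under the listed inner-product hypotheses on `H`, `J`, the basis
vectors `E_{1,0}`, `E_{2,1}` and the normalized eigenfunction `f = E_{1,0} + f₊`, any
eigenvalue `μ` with `Re μ > 0` satisfies `|μ + i/2| ≤ (3/10)√(5/6)`. -/
theorem stmt_18 {X : Type*} [NormedAddCommGroup X] [InnerProductSpace ℂ X] [CompleteSpace X]
    (J H : X →ₗ[ℂ] X)
    (hJ : ∀ a b : X, (inner ℂ (J a) b : ℂ) = -inner ℂ a (J b))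
    (hH : ∀ a b : X, (inner ℂ (H a) b : ℂ) = inner ℂ a (H b))
    (E₁₀ E₂₁ f fp : X) (μ : ℂ)
    (hf : f = E₁₀ + fp)
    (hperp : (inner ℂ E₁₀ fp : ℂ) = 0)
    (hHf : (inner ℂ (H f) f : ℂ) = 0)
    (hHE10 : H E₁₀ = -E₁₀)
    (hHE10form : (inner ℂ (H E₁₀) E₁₀ : ℂ) = -(4 * (Real.pi : ℂ) ^ 2))
    (hHfp : 3 / 5 * ‖fp‖ ^ 2 ≤ ((inner ℂ (H fp) fp : ℂ)).re)
    (hJE10 : J E₁₀ = (Complex.I / 2) • E₁₀ - (1 / 2 : ℂ) • E₂₁)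
    (hHE21 : H E₂₁ = (-(3 / 5) : ℂ) • E₂₁)
    (hnorm10 : ‖E₁₀‖ ^ 2 = 4 * Real.pi ^ 2)
    (hnorm21 : ‖E₂₁‖ = Real.sqrt 2 * Real.pi)
    (heig : J (H f) = μ • f) (hre : 0 < μ.re) :
    ‖μ + Complex.I / 2‖ ≤ 3 / 10 * Real.sqrt (5 / 6) :=
  stmt_18_general J H hJ hH E₁₀ E₂₁ f fp μ hf hperp hHf hHE10 hHfp hJE10 hHE21 hnorm10 hnorm21 heig
end

section
/- For the (m,n) Taylor–Green vortex with 1 ≤ m ≤ n, the self-adjoint operator H = Id + (m²+n²)Δ⁻¹ restricted to the subspace spanned by {cos(j'mx)cos(k'ny) : j', k' ≥ 0, j'+k' odd} has negative directions exactly at cos(ny) together with cos(j'mx) for odd j' with (j'm)² < m²+n². If 4a - 1 < √(n²/m²+1) < 4a+1 for some positive integer a, the number of odd j' ≥ 1 with (j'm)² < m²+n² is exactly 2a, hence the total number of negative directions is the odd number 2a+1. -/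
/-!
A mode `(j', k')` is a negative direction iff `(j'm)² + (k'n)² < m² + n²`. Since `m ≤ n`,
`k' ≥ 2` is too large, and `k' = 1` forces `j'` to be even, hence `0` (as `(2m)² > m²`); so
apart from `cos(ny)` only the modes `k' = 0` with `j'` odd survive. Dividing by `m²`, the
condition on an odd `j'` reads `j' < √(n²/m² + 1)`, and as `√(n²/m² + 1)` lies strictly
between `4a - 1` and `4a + 1`, the admissible odd `j'` are exactly the odd numbers below
`4a`, of which there are `2a`.
-/

lemma ncard_setOf_odd_lt_two_mul (k : ℕ) : {j : ℕ | Odd j ∧ j < 2 * k}.ncard = k := by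
  have himage : {j : ℕ | Odd j ∧ j < 2 * k} = (Finset.range k).image (fun i => 2 * i + 1) := by
    ext j
    simp only [Set.mem_ofPred_eq, Finset.coe_image, Set.mem_image, Finset.mem_coe,
      Finset.mem_range, Nat.odd_iff]
    constructor
    · rintro ⟨hodd, hlt⟩
      exact ⟨j / 2, by omega, by omega⟩
    · rintro ⟨i, hi, rfl⟩
      omega
  rw [himage, Set.ncard_coe_finset, Finset.card_image_of_injective _ (fun x y h => by omega),
    Finset.card_range]

lemma Odd.natCast_lt_iff_lt_four_mul {j a : ℕ} (hj : Odd j) {s : ℝ}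
    (hs₁ : 4 * (a : ℝ) - 1 < s) (hs₂ : s < 4 * (a : ℝ) + 1) : (j : ℝ) < s ↔ j < 4 * a := by
  obtain ⟨i, rfl⟩ := hj
  constructor
  · intro h
    have : 2 * i + 1 < 4 * a + 1 := by exact_mod_cast h.trans hs₂
    omega
  · intro h
    have : ((2 * i + 1 + 1 : ℕ) : ℝ) ≤ 4 * a := by exact_mod_cast (by omega : 2 * i + 1 + 1 ≤ 4 * a)
    push_cast at this ⊢
    linarith

lemma sq_mul_lt_sq_add_sq_iff_lt_sqrt {m : ℕ} (hm : 0 < m) (n j : ℕ) :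
    (j * m) ^ 2 < m ^ 2 + n ^ 2 ↔ (j : ℝ) < √((n : ℝ) ^ 2 / (m : ℝ) ^ 2 + 1) := by
  have hm2 : (0 : ℝ) < (m : ℝ) ^ 2 := by positivity
  rw [Real.lt_sqrt (Nat.cast_nonneg j), ← Nat.cast_lt (α := ℝ), div_add_one hm2.ne',
    lt_div_iff₀ hm2]
  push_cast
  ring_nf

lemma sq_mul_add_sq_mul_lt_iff {m n j k : ℕ} (hm : 0 < m) (hmn : m ≤ n) (hodd : Odd (j + k)) :
    (j * m) ^ 2 + (k * n) ^ 2 < m ^ 2 + n ^ 2 ↔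
      (j = 0 ∧ k = 1) ∨ (k = 0 ∧ Odd j ∧ (j * m) ^ 2 < m ^ 2 + n ^ 2) := by
  constructor
  · intro h
    match k, hodd with
    | 0, hodd => simp_all
    | 1, hodd =>
      refine .inl ⟨?_, rfl⟩
      have hj : Even j := by simpa [Nat.odd_add_one] using hodd
      by_contra hj0
      have : (2 * m) ^ 2 ≤ (j * m) ^ 2 :=
        Nat.pow_le_pow_left (Nat.mul_le_mul_right m (by rw [Nat.even_iff] at hj; omega)) 2
      nlinarith
    | k + 2, _ =>
      have : (2 * n) ^ 2 ≤ ((k + 2) * n) ^ 2 :=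
        Nat.pow_le_pow_left (Nat.mul_le_mul_right n (by omega)) 2
      nlinarith
  · rintro (⟨rfl, rfl⟩ | ⟨rfl, -, hlt⟩)
    · simpa using pow_pos hm 2
    · simpa using hlt

lemma sq_mul_add_sq_mul_pos {m n j k : ℕ} (hm : 0 < m) (hn : 0 < n) (hodd : Odd (j + k)) :
    0 < (j * m) ^ 2 + (k * n) ^ 2 := by
  have : j ≠ 0 ∨ k ≠ 0 := by rw [Nat.odd_iff] at hodd; omega
  rcases this with hj | hk
  · have : 0 < j * m := Nat.mul_pos (Nat.pos_of_ne_zero hj) hm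
    positivity
  · have : 0 < k * n := Nat.mul_pos (Nat.pos_of_ne_zero hk) hn
    positivity

theorem stmt_19_general (m n a : ℕ) (hm : 1 ≤ m) (hmn : m ≤ n)
    (hcond₁ : (4 * (a : ℝ) - 1) < Real.sqrt ((n : ℝ) ^ 2 / (m : ℝ) ^ 2 + 1))
    (hcond₂ : Real.sqrt ((n : ℝ) ^ 2 / (m : ℝ) ^ 2 + 1) < 4 * (a : ℝ) + 1) :
    (∀ j' k' : ℕ, Odd (j' + k') →
      ((1 - ((m : ℝ) ^ 2 + (n : ℝ) ^ 2) / (((j' * m : ℕ) : ℝ) ^ 2 + ((k' * n : ℕ) : ℝ) ^ 2) < 0)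
        ↔ ((j' = 0 ∧ k' = 1) ∨ (k' = 0 ∧ Odd j' ∧ (j' * m) ^ 2 < m ^ 2 + n ^ 2))))
    ∧ {j' : ℕ | Odd j' ∧ (j' * m) ^ 2 < m ^ 2 + n ^ 2}.ncard = 2 * a
    ∧ Odd (1 + {j' : ℕ | Odd j' ∧ (j' * m) ^ 2 < m ^ 2 + n ^ 2}.ncard) := by
  have hcard : {j' : ℕ | Odd j' ∧ (j' * m) ^ 2 < m ^ 2 + n ^ 2}.ncard = 2 * a := by
    have hset : {j' : ℕ | Odd j' ∧ (j' * m) ^ 2 < m ^ 2 + n ^ 2} =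
        {j : ℕ | Odd j ∧ j < 2 * (2 * a)} := by
      ext j
      simp only [Set.mem_ofPred_eq, ← mul_assoc, Nat.reduceMul]
      refine and_congr_right fun hj => ?_
      rw [sq_mul_lt_sq_add_sq_iff_lt_sqrt hm, hj.natCast_lt_iff_lt_four_mul hcond₁ hcond₂]
    rw [hset, ncard_setOf_odd_lt_two_mul]
  refine ⟨fun j k hodd => ?_, hcard, hcard ▸ ⟨a, by ring⟩⟩
  have hpos := sq_mul_add_sq_mul_pos hm ((Nat.lt_of_lt_of_le hm hmn)) hodd
  rw [sub_neg, one_lt_div (by exact_mod_cast hpos), ← sq_mul_add_sq_mul_lt_iff hm hmn hodd]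
  exact_mod_cast Iff.rfl

/-- For the `(m,n)` Taylor–Green vortex with `1 ≤ m ≤ n`: on the subspace spanned by
`cos(j'mx)cos(k'ny)` with `j' + k'` odd, the multiplier `1 - (m²+n²)/((j'm)²+(k'n)²)` of
`H = Id + (m²+n²)Δ⁻¹` is negative exactly at `(j',k') = (0,1)` (the mode `cos(ny)`) and at
`k' = 0` with `j'` odd and `(j'm)² < m²+n²`. Moreover, if `4a-1 < √(n²/m²+1) < 4a+1` for a
positive integer `a`, then the number of odd `j'` with `(j'm)² < m²+n²` is exactly `2a`, so
the total number of negative directions is the odd number `2a+1`. -/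
theorem stmt_19 (m n a : ℕ) (hm : 1 ≤ m) (hmn : m ≤ n) (ha : 1 ≤ a)
    (hcond₁ : (4 * (a : ℝ) - 1) < Real.sqrt ((n : ℝ) ^ 2 / (m : ℝ) ^ 2 + 1))
    (hcond₂ : Real.sqrt ((n : ℝ) ^ 2 / (m : ℝ) ^ 2 + 1) < 4 * (a : ℝ) + 1) :
    (∀ j' k' : ℕ, Odd (j' + k') →
      ((1 - ((m : ℝ) ^ 2 + (n : ℝ) ^ 2) / (((j' * m : ℕ) : ℝ) ^ 2 + ((k' * n : ℕ) : ℝ) ^ 2) < 0)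
        ↔ ((j' = 0 ∧ k' = 1) ∨ (k' = 0 ∧ Odd j' ∧ (j' * m) ^ 2 < m ^ 2 + n ^ 2))))
    ∧ {j' : ℕ | Odd j' ∧ (j' * m) ^ 2 < m ^ 2 + n ^ 2}.ncard = 2 * a
    ∧ Odd (1 + {j' : ℕ | Odd j' ∧ (j' * m) ^ 2 < m ^ 2 + n ^ 2}.ncard) :=
  stmt_19_general m n a hm hmn hcond₁ hcond₂
end
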